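/- arXiv:1703.02415 — 4 statements merged into one kernel-verified Lean document; each statement's English description precedes it below -/
import Mathlib

section
/- Let Q_n be the set of all permutations of length n which avoid every element of {2143, 2413, 3142}, and let q_n = |Q_n|. Define the sequence (r_n) by r_0 = r_1 = 1 and, for n > 1, r_n = Σ_{i=1}^{n-1} Σ_{j=i+1}^{n} r_{i-1}·r_{j-i-1}·r_{n-j}. Then q_n ≥ r_n for all n ≥ 0. -/
/-- A *permutation word* of length `n`: a list that is a rearrangement of `1, 2, ..., n`
(where `n` is its length). -/
def IsPermWord (w : List ℕ) : Prop := w.Perm (List.range' 1 w.length)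

/-- Two words are *order-isomorphic*: they have the same length and corresponding
entries compare in the same way. -/
def OrderIsoWord (u v : List ℕ) : Prop :=
  u.length = v.length ∧
    ∀ (i j : ℕ) (hi : i < u.length) (hj : j < u.length)
      (hi' : i < v.length) (hj' : j < v.length),
      (u[i]'hi < u[j]'hj ↔ v[i]'hi' < v[j]'hj')

/-- `w` contains a copy of the pattern `σ`: some subsequence of `w` (given by increasing
indices) is order-isomorphic to `σ`. -/
def ContainsPattern (w σ : List ℕ) : Prop :=
  ∃ s : List ℕ, s.Sublist w ∧ OrderIsoWord s σ

/-- `w` avoids the pattern `σ`: it contains no copy of `σ`. -/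
def AvoidsPattern (w σ : List ℕ) : Prop := ¬ ContainsPattern w σ

def Pat3 (σ : List ℕ) : Prop := σ = [2,1,4,3] ∨ σ = [2,4,1,3] ∨ σ = [3,1,4,2]

lemma Pat3.length {σ : List ℕ} (h : Pat3 σ) : σ.length = 4 := by
  rcases h with h|h|h <;> simp [h]

lemma avoids_of_short {w σ : List ℕ} (hσ : Pat3 σ) (hw : w.length ≤ 3) :
    AvoidsPattern w σ := by
  rintro ⟨s, hsub, hiso⟩
  have h1 := hiso.1
  have h2 := hsub.length_le
  rw [hσ.length] at h1
  omega

lemma avoids_shift {w σ : List ℕ} (k : ℕ) (h : AvoidsPattern w σ) :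
    AvoidsPattern (w.map (fun x => k + x)) σ := by
  rintro ⟨s, hsub, hiso⟩
  obtain ⟨s', hs', rfl⟩ := List.sublist_map_iff.mp hsub
  refine h ⟨s', hs', ?_, ?_⟩
  · have := hiso.1; simpa using this
  · intro i j hi hj hi' hj'
    have := hiso.2 i j (by simpa using hi) (by simpa using hj) hi' hj'
    simpa using this

lemma avoid_sep_append {σ : List ℕ} (hσ : Pat3 σ) {X Y : List ℕ}
    (hsep : ∀ x ∈ X, ∀ y ∈ Y, y < x)
    (hX : AvoidsPattern X σ) (hY : AvoidsPattern Y σ) : AvoidsPattern (X ++ Y) σ := by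
  rintro ⟨s, hsub, hiso⟩
  have hslen : s.length = 4 := by rw [hiso.1, hσ.length]
  obtain ⟨s1, s2, rfl, h1, h2⟩ := List.sublist_append_iff.mp hsub
  have hL : s1.length + s2.length = 4 := by simpa using hslen
  have hσ4 : σ.length = 4 := hσ.length
  have key : ∀ i j, (hi : i < s1.length) → (hj : s1.length ≤ j) → (hj4 : j < 4) →
      σ[j]'(by omega) < σ[i]'(by omega) := by
    intro i j hi hj hj4
    have hilen : i < (s1 ++ s2).length := by simp; omega
    have hjlen : j < (s1 ++ s2).length := by simp; omega
    have hx : (s1 ++ s2)[i]'hilen = s1[i]'hi := List.getElem_append_left hi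
    have hj2 : j - s1.length < s2.length := by omega
    have hy : (s1 ++ s2)[j]'hjlen = s2[j - s1.length]'hj2 := List.getElem_append_right hj
    have hxmem : s1[i]'hi ∈ X := h1.subset (List.getElem_mem hi)
    have hymem : s2[j - s1.length]'hj2 ∈ Y := h2.subset (List.getElem_mem hj2)
    have hlt : (s1 ++ s2)[j]'hjlen < (s1 ++ s2)[i]'hilen := by
      rw [hx, hy]; exact hsep _ hxmem _ hymem
    exact (hiso.2 j i hjlen hilen (by omega) (by omega)).mp hlt
  have hcases : s1.length = 0 ∨ s1.length = 1 ∨ s1.length = 2 ∨ s1.length = 3 ∨ s1.length = 4 := by omega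
  rcases hcases with h|h|h|h|h
  · have : s1 = [] := List.length_eq_zero_iff.mp h
    subst this
    exact hY ⟨s2, h2, by simpa using hiso⟩
  · rcases hσ with rfl|rfl|rfl
    · have := key 0 3 (by omega) (by omega) (by omega); simp at this
    · have := key 0 3 (by omega) (by omega) (by omega); simp at this
    · have := key 0 2 (by omega) (by omega) (by omega); simp at this
  · rcases hσ with rfl|rfl|rfl
    · have := key 1 2 (by omega) (by omega) (by omega); simp at this
    · have := key 0 3 (by omega) (by omega) (by omega); simp at this
    · have := key 1 2 (by omega) (by omega) (by omega); simp at this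
  · rcases hσ with rfl|rfl|rfl
    · have := key 0 3 (by omega) (by omega) (by omega); simp at this
    · have := key 2 3 (by omega) (by omega) (by omega); simp at this
    · have := key 1 3 (by omega) (by omega) (by omega); simp at this
  · have : s2 = [] := List.length_eq_zero_iff.mp (by omega)
    subst this
    exact hX ⟨s1, h1, by simpa using hiso⟩

lemma avoid_min_cons {σ : List ℕ} (hσ : Pat3 σ) {x : ℕ} {Y : List ℕ}
    (hx : ∀ y ∈ Y, x < y) (hY : AvoidsPattern Y σ) : AvoidsPattern (x :: Y) σ := by
  rintro ⟨s, hsub, hiso⟩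
  have hσ4 : σ.length = 4 := hσ.length
  cases hsub with
  | cons _ h => exact hY ⟨s, h, hiso⟩
  | cons_cons _ h =>
    rename_i s'
    have hslen : s'.length = 3 := by
      have := hiso.1; simp [hσ4] at this; omega
    have key : ∀ k, 1 ≤ k → (hk : k < 4) → σ[0]'(by omega) < σ[k]'(by omega) := by
      intro k hk1 hk4
      have hk' : k - 1 < s'.length := by omega
      have hklen : k < (x :: s').length := by simp; omega
      have h0len : (0:ℕ) < (x :: s').length := by simp
      have hy : (x :: s')[k]'hklen = s'[k-1]'hk' := by
        rcases k with _|k; omega; simp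
      have hmem : s'[k-1]'hk' ∈ Y := h.subset (List.getElem_mem hk')
      have hlt : (x :: s')[0]'h0len < (x :: s')[k]'hklen := by
        rw [hy]; exact hx _ hmem
      exact (hiso.2 0 k h0len hklen (by omega) (by omega)).mp hlt
    rcases hσ with rfl|rfl|rfl
    · have := key 1 (by omega) (by omega); simp at this
    · have := key 2 (by omega) (by omega); simp at this
    · have := key 1 (by omega) (by omega); simp at this

def glue (α β γ : List ℕ) : List ℕ :=
  α.map (fun x => (β.length + γ.length + 2) + x) ++
    1 :: (β.map (fun x => (γ.length + 2) + x) ++ 2 :: γ.map (fun x => 2 + x))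

lemma glue_length (α β γ : List ℕ) :
    (glue α β γ).length = α.length + β.length + γ.length + 2 := by
  simp [glue]; omega

lemma permWord_mem {w : List ℕ} (h : IsPermWord w) {x : ℕ} (hx : x ∈ w) :
    1 ≤ x ∧ x ≤ w.length := by
  have := h.mem_iff.mp hx
  rw [List.mem_range'_1] at this
  omega

lemma glue_perm {α β γ : List ℕ} (hα : IsPermWord α) (hβ : IsPermWord β)
    (hγ : IsPermWord γ) : IsPermWord (glue α β γ) := by
  unfold IsPermWord at *
  rw [glue_length]
  set a := α.length
  set b := β.length
  set c := γ.length
  have hA : (α.map (fun x => (b + c + 2) + x)).Perm (List.range' (b+c+3) a) := by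
    have := hα.map (fun x => (b + c + 2) + x)
    rwa [List.map_add_range'] at this
  have hB : (β.map (fun x => (c + 2) + x)).Perm (List.range' (c+3) b) := by
    have := hβ.map (fun x => (c + 2) + x)
    rwa [List.map_add_range'] at this
  have hC : (γ.map (fun x => 2 + x)).Perm (List.range' 3 c) := by
    have := hγ.map (fun x => 2 + x)
    rwa [List.map_add_range'] at this
  have e2 : List.range' (c+3) b ++ List.range' (b+c+3) a = List.range' (c+3) (a+b) := by
    have h := List.range'_append (s := c+3) (m := b) (n := a) (step := 1)
    rw [show (c+3) + 1*b = b+c+3 by ring] at h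
    exact h.trans (by congr 1; omega)
  have e1 : List.range' 3 c ++ List.range' (c+3) (a+b) = List.range' 3 (a+b+c) := by
    have h := List.range'_append (s := 3) (m := c) (n := a+b) (step := 1)
    rw [show (3:ℕ) + 1*c = c+3 by ring] at h
    rw [show a+b+c = (a+b)+c by ring]
    exact h.trans (by congr 1; omega)
  have e0 : List.range' 1 2 ++ List.range' 3 (a+b+c) = List.range' 1 (a+b+c+2) := by
    have h := List.range'_append (s := 1) (m := 2) (n := a+b+c) (step := 1)
    rw [show (1:ℕ) + 1*2 = 3 by norm_num] at h
    rw [show a+b+c+2 = (a+b+c)+2 by ring]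
    exact h.trans (by congr 1; omega)
  have hsplit : List.range' 1 (a+b+c+2) =
      List.range' 1 2 ++ (List.range' 3 c ++ (List.range' (c+3) b ++ List.range' (b+c+3) a)) := by
    rw [← e0, ← e1, ← e2]
  rw [hsplit, ← Multiset.coe_eq_coe]
  have hA' := Multiset.coe_eq_coe.mpr hA
  have hB' := Multiset.coe_eq_coe.mpr hB
  have hC' := Multiset.coe_eq_coe.mpr hC
  have hr12 : List.range' 1 2 = [1, 2] := by decide
  unfold glue
  rw [hr12]
  simp only [← Multiset.coe_add, ← Multiset.cons_coe]
  simp only [← Multiset.singleton_add]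
  rw [hA', hB', hC']
  abel

lemma glue_avoids {σ : List ℕ} (hσ : Pat3 σ) {α β γ : List ℕ}
    (hα : IsPermWord α) (hβ : IsPermWord β) (hγ : IsPermWord γ)
    (aα : AvoidsPattern α σ) (aβ : AvoidsPattern β σ) (aγ : AvoidsPattern γ σ) :
    AvoidsPattern (glue α β γ) σ := by
  have hCmem : ∀ y ∈ γ.map (fun x => 2 + x), 3 ≤ y ∧ y ≤ γ.length + 2 := by
    intro y hy
    obtain ⟨x, hx, rfl⟩ := List.mem_map.mp hy
    have := permWord_mem hγ hx
    omega
  have hBmem : ∀ y ∈ β.map (fun x => (γ.length + 2) + x),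
      γ.length + 3 ≤ y ∧ y ≤ γ.length + 2 + β.length := by
    intro y hy
    obtain ⟨x, hx, rfl⟩ := List.mem_map.mp hy
    have := permWord_mem hβ hx
    omega
  have s1 : AvoidsPattern (2 :: γ.map (fun x => 2 + x)) σ :=
    avoid_min_cons hσ (fun y hy => by have := hCmem y hy; omega) (avoids_shift 2 aγ)
  have s2 : AvoidsPattern (β.map (fun x => (γ.length + 2) + x) ++ 2 :: γ.map (fun x => 2 + x)) σ := by
    refine avoid_sep_append hσ ?_ (avoids_shift _ aβ) s1
    intro x hx y hy
    have hx' := hBmem x hx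
    rcases List.mem_cons.mp hy with rfl | hy'
    · omega
    · have := hCmem y hy'; omega
  have s3 : AvoidsPattern (1 :: (β.map (fun x => (γ.length + 2) + x) ++ 2 :: γ.map (fun x => 2 + x))) σ := by
    refine avoid_min_cons hσ ?_ s2
    intro y hy
    rcases List.mem_append.mp hy with hy' | hy'
    · have := hBmem y hy'; omega
    · rcases List.mem_cons.mp hy' with rfl | hy''
      · omega
      · have := hCmem y hy''; omega
  refine avoid_sep_append hσ ?_ (avoids_shift _ aα) s3
  intro x hx y hy
  obtain ⟨x', hx', rfl⟩ := List.mem_map.mp hx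
  have hx1 := permWord_mem hα hx'
  rcases List.mem_cons.mp hy with rfl | hy'
  · omega
  · rcases List.mem_append.mp hy' with hy'' | hy''
    · have := hBmem y hy''; omega
    · rcases List.mem_cons.mp hy'' with rfl | hy''
      · omega
      · have := hCmem y hy''; omega

lemma glue_get_one (α β γ : List ℕ) : (glue α β γ)[α.length]? = some 1 := by
  unfold glue
  rw [List.getElem?_append_right (by simp)]
  simp

lemma glue_get_two (α β γ : List ℕ) :
    (glue α β γ)[α.length + 1 + β.length]? = some 2 := by
  unfold glue
  rw [List.getElem?_append_right (by simp; omega)]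
  simp only [List.length_map]
  rw [show α.length + 1 + β.length - α.length = β.length + 1 by omega,
    List.getElem?_cons_succ, List.getElem?_append_right (by simp)]
  simp

lemma glue_get_A {α β γ : List ℕ} (hα : IsPermWord α) {i v : ℕ} (hi : i < α.length)
    (hv : (glue α β γ)[i]? = some v) : 3 ≤ v := by
  unfold glue at hv
  rw [List.getElem?_append_left (by simp; omega), List.getElem?_map] at hv
  rw [List.getElem?_eq_getElem hi] at hv
  simp at hv
  have := permWord_mem hα (List.getElem_mem hi)
  omega

lemma glue_get_B {α β γ : List ℕ} (hβ : IsPermWord β) {i v : ℕ}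
    (h1 : α.length + 1 ≤ i) (h2 : i < α.length + 1 + β.length)
    (hv : (glue α β γ)[i]? = some v) : 3 ≤ v := by
  unfold glue at hv
  rw [List.getElem?_append_right (by simp; omega)] at hv
  simp only [List.length_map] at hv
  rw [show i - α.length = (i - α.length - 1) + 1 by omega, List.getElem?_cons_succ] at hv
  have hib : i - α.length - 1 < β.length := by omega
  rw [List.getElem?_append_left (by simp; omega), List.getElem?_map,
    List.getElem?_eq_getElem hib] at hv
  simp at hv
  have := permWord_mem hβ (List.getElem_mem hib)
  omega

lemma glue_inj {α β γ α' β' γ' : List ℕ}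
    (hα : IsPermWord α) (hβ : IsPermWord β) (hγ : IsPermWord γ)
    (hα' : IsPermWord α') (hβ' : IsPermWord β') (hγ' : IsPermWord γ')
    (h : glue α β γ = glue α' β' γ') : α = α' ∧ β = β' ∧ γ = γ' := by
  have hlen : α.length + β.length + γ.length = α'.length + β'.length + γ'.length := by
    have := congrArg List.length h
    rw [glue_length, glue_length] at this
    omega
  have ha : α.length = α'.length := by
    rcases Nat.lt_trichotomy α.length α'.length with hlt | heq | hlt
    · have h1 := glue_get_one α β γ
      rw [h] at h1
      exact absurd (glue_get_A hα' hlt h1) (by omega)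
    · exact heq
    · have h1 := glue_get_one α' β' γ'
      rw [← h] at h1
      exact absurd (glue_get_A hα hlt h1) (by omega)
  have hb : β.length = β'.length := by
    rcases Nat.lt_trichotomy β.length β'.length with hlt | heq | hlt
    · have h2 := glue_get_two α β γ
      rw [h] at h2
      exact absurd (glue_get_B hβ' (by omega) (by omega) h2) (by omega)
    · exact heq
    · have h2 := glue_get_two α' β' γ'
      rw [← h] at h2
      exact absurd (glue_get_B hβ (by omega) (by omega) h2) (by omega)
  have hc : γ.length = γ'.length := by omega
  unfold glue at h
  rw [hb, hc] at h
  obtain ⟨hA, hrest⟩ := List.append_inj h (by simp [ha])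
  have hBC := List.cons_injective hrest
  obtain ⟨hB, hC2⟩ := List.append_inj hBC (by simp [hb])
  have hC := List.cons_injective hC2
  have hfinj : ∀ k : ℕ, Function.Injective (fun x : ℕ => k + x) := by
    intro k x y hxy; simpa using hxy
  refine ⟨?_, ?_, ?_⟩
  · exact List.map_injective_iff.mpr (hfinj _) hA
  · exact List.map_injective_iff.mpr (hfinj _) hB
  · exact List.map_injective_iff.mpr (hfinj _) hC

def Pij (n : ℕ) : Finset (ℕ × ℕ) :=
  (Finset.Icc 1 (n+1) ×ˢ Finset.Icc 2 (n+2)).filter (fun p => p.1 + 1 ≤ p.2)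

lemma mem_Pij {n : ℕ} {p : ℕ × ℕ} (hp : p ∈ Pij n) :
    1 ≤ p.1 ∧ p.1 ≤ n + 1 ∧ p.1 + 1 ≤ p.2 ∧ p.2 ≤ n + 2 := by
  simp only [Pij, Finset.mem_filter, Finset.mem_product, Finset.mem_Icc] at hp
  omega

def F : ℕ → Finset (List ℕ)
  | 0 => {([] : List ℕ)}
  | 1 => {[1]}
  | n+2 => (Pij n).attach.biUnion (fun p =>
      ((F (p.1.1 - 1)) ×ˢ ((F (p.1.2 - p.1.1 - 1)) ×ˢ (F (n+2 - p.1.2)))).image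
        (fun q => glue q.1 q.2.1 q.2.2))
  decreasing_by
  · have := mem_Pij p.2; omega
  · have := mem_Pij p.2; omega
  · have := mem_Pij p.2; omega

lemma Fprop : ∀ n, ∀ w ∈ F n, w.length = n ∧ IsPermWord w ∧
    AvoidsPattern w [2,1,4,3] ∧ AvoidsPattern w [2,4,1,3] ∧ AvoidsPattern w [3,1,4,2] := by
  intro n
  induction n using Nat.strong_induction_on with
  | _ n ih =>
    match n with
    | 0 =>
      intro w hw
      simp only [F, Finset.mem_singleton] at hw
      subst hw
      refine ⟨rfl, ?_, ?_, ?_, ?_⟩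
      · simp [IsPermWord]
      all_goals exact avoids_of_short (by simp [Pat3]) (by simp)
    | 1 =>
      intro w hw
      simp only [F, Finset.mem_singleton] at hw
      subst hw
      refine ⟨rfl, ?_, ?_, ?_, ?_⟩
      · simp [IsPermWord, List.range'_one]
      all_goals exact avoids_of_short (by simp [Pat3]) (by simp)
    | n+2 =>
      intro w hw
      rw [F] at hw
      simp only [Finset.mem_biUnion, Finset.mem_attach, true_and, Subtype.exists,
        Finset.mem_image, Finset.mem_product] at hw
      obtain ⟨p, hp, q, ⟨hq1, hq2, hq3⟩, rfl⟩ := hw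
      have hpm := mem_Pij hp
      have h1 := ih (p.1 - 1) (by omega) _ hq1
      have h2 := ih (p.2 - p.1 - 1) (by omega) _ hq2
      have h3 := ih (n + 2 - p.2) (by omega) _ hq3
      refine ⟨?_, glue_perm h1.2.1 h2.2.1 h3.2.1, ?_, ?_, ?_⟩
      · rw [glue_length, h1.1, h2.1, h3.1]; omega
      · exact glue_avoids (Or.inl rfl) h1.2.1 h2.2.1 h3.2.1 h1.2.2.1 h2.2.2.1 h3.2.2.1
      · exact glue_avoids (Or.inr (Or.inl rfl)) h1.2.1 h2.2.1 h3.2.1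
          h1.2.2.2.1 h2.2.2.2.1 h3.2.2.2.1
      · exact glue_avoids (Or.inr (Or.inr rfl)) h1.2.1 h2.2.1 h3.2.1
          h1.2.2.2.2 h2.2.2.2.2 h3.2.2.2.2

lemma card_F (r : ℕ → ℕ) (h0 : r 0 = 1) (h1 : r 1 = 1)
    (hrec : ∀ n, 1 < n → r n = ∑ i ∈ Finset.Icc 1 (n - 1), ∑ j ∈ Finset.Icc (i + 1) n,
      r (i - 1) * r (j - i - 1) * r (n - j)) :
    ∀ n, r n ≤ (F n).card := by
  intro n
  induction n using Nat.strong_induction_on with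
  | _ n ih =>
    match n with
    | 0 => simp [F, h0]
    | 1 => simp [F, h1]
    | n+2 =>
      have hr := hrec (n+2) (by omega)
      rw [show n+2-1 = n+1 by omega] at hr
      -- Step A : rewrite r (n+2) as a sum over Pij n
      have stepA : r (n+2) = ∑ p ∈ Pij n, r (p.1 - 1) * r (p.2 - p.1 - 1) * r (n + 2 - p.2) := by
        rw [hr, Pij, Finset.sum_filter, Finset.sum_product]
        refine Finset.sum_congr rfl ?_
        intro i hi
        rw [Finset.mem_Icc] at hi
        rw [← Finset.sum_filter]
        refine Finset.sum_congr ?_ (fun _ _ => rfl)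
        ext j
        simp only [Finset.mem_Icc, Finset.mem_filter]
        omega
      -- Step B : the cardinality of F (n+2)
      rw [F]
      rw [Finset.card_biUnion ?hdisj]
      case hdisj =>
        intro x _ y _ hxy
        rw [Function.onFun, Finset.disjoint_left]
        rintro w hwx hwy
        simp only [Finset.mem_image, Finset.mem_product] at hwx hwy
        obtain ⟨q, ⟨hq1, hq2, hq3⟩, hg⟩ := hwx
        obtain ⟨q', ⟨hq1', hq2', hq3'⟩, hg'⟩ := hwy
        have P1 := Fprop _ _ hq1; have P2 := Fprop _ _ hq2; have P3 := Fprop _ _ hq3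
        have P1' := Fprop _ _ hq1'; have P2' := Fprop _ _ hq2'; have P3' := Fprop _ _ hq3'
        have heq : glue q.1 q.2.1 q.2.2 = glue q'.1 q'.2.1 q'.2.2 := by rw [hg, hg']
        obtain ⟨e1, e2, e3⟩ := glue_inj P1.2.1 P2.2.1 P3.2.1 P1'.2.1 P2'.2.1 P3'.2.1 heq
        have hx := mem_Pij x.2
        have hy := mem_Pij y.2
        have l1 : q.1.length = q'.1.length := by rw [e1]
        have l2 : q.2.1.length = q'.2.1.length := by rw [e2]
        rw [P1.1, P1'.1] at l1
        rw [P2.1, P2'.1] at l2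
        apply hxy
        apply Subtype.ext
        have : x.1.1 = y.1.1 := by omega
        have : x.1.2 = y.1.2 := by omega
        exact Prod.ext ‹x.1.1 = y.1.1› ‹x.1.2 = y.1.2›
      -- sum over attach
      rw [Finset.sum_attach (Pij n) (fun p =>
        (((F (p.1 - 1)) ×ˢ ((F (p.2 - p.1 - 1)) ×ˢ (F (n+2 - p.2)))).image
          (fun q => glue q.1 q.2.1 q.2.2)).card)]
      rw [stepA]
      refine Finset.sum_le_sum ?_
      intro p hp
      have hpm := mem_Pij hp
      rw [Finset.card_image_of_injOn ?hinj]
      case hinj =>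
        rintro q hq q' hq' heq
        simp only [Finset.coe_product, Set.mem_prod, Finset.mem_coe] at hq hq'
        obtain ⟨hq1, hq2, hq3⟩ := hq
        obtain ⟨hq1', hq2', hq3'⟩ := hq'
        have P1 := Fprop _ _ hq1; have P2 := Fprop _ _ hq2; have P3 := Fprop _ _ hq3
        have P1' := Fprop _ _ hq1'; have P2' := Fprop _ _ hq2'; have P3' := Fprop _ _ hq3'
        obtain ⟨e1, e2, e3⟩ := glue_inj P1.2.1 P2.2.1 P3.2.1 P1'.2.1 P2'.2.1 P3'.2.1 heq
        exact Prod.ext e1 (Prod.ext e2 e3)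
      rw [Finset.card_product, Finset.card_product]
      have i1 := ih (p.1 - 1) (by omega)
      have i2 := ih (p.2 - p.1 - 1) (by omega)
      have i3 := ih (n + 2 - p.2) (by omega)
      calc r (p.1 - 1) * r (p.2 - p.1 - 1) * r (n + 2 - p.2)
          ≤ (F (p.1 - 1)).card * r (p.2 - p.1 - 1) * r (n + 2 - p.2) := by
            exact Nat.mul_le_mul_right _ (Nat.mul_le_mul_right _ i1)
        _ ≤ (F (p.1 - 1)).card * (F (p.2 - p.1 - 1)).card * r (n + 2 - p.2) := by
            exact Nat.mul_le_mul_right _ (Nat.mul_le_mul_left _ i2)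
        _ ≤ (F (p.1 - 1)).card * (F (p.2 - p.1 - 1)).card * (F (n + 2 - p.2)).card :=
            Nat.mul_le_mul_left _ i3
        _ = (F (p.1 - 1)).card * ((F (p.2 - p.1 - 1)).card * (F (n + 2 - p.2)).card) := by
            ring

/-- Let `q n` be the number of permutations of length `n` avoiding every
element of `{2143, 2413, 3142}`.  If `r 0 = r 1 = 1` and, for `n > 1`,
`r n = ∑_{i=1}^{n-1} ∑_{j=i+1}^{n} r (i-1) * r (j-i-1) * r (n-j)`, then `q n ≥ r n`
for all `n ≥ 0`. -/
theorem card_avoid_2143_2413_3142_ge (r : ℕ → ℕ)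
    (h0 : r 0 = 1) (h1 : r 1 = 1)
    (hrec : ∀ n, 1 < n → r n = ∑ i ∈ Finset.Icc 1 (n - 1), ∑ j ∈ Finset.Icc (i + 1) n,
      r (i - 1) * r (j - i - 1) * r (n - j))
    (n : ℕ) :
    r n ≤ Nat.card {w : List ℕ // w.length = n ∧ IsPermWord w ∧
      AvoidsPattern w [2, 1, 4, 3] ∧ AvoidsPattern w [2, 4, 1, 3] ∧
      AvoidsPattern w [3, 1, 4, 2]} := by
  have key : r n ≤ (F n).card := card_F r h0 h1 hrec n
  set S : Set (List ℕ) := {w | w.length = n ∧ IsPermWord w ∧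
      AvoidsPattern w [2, 1, 4, 3] ∧ AvoidsPattern w [2, 4, 1, 3] ∧
      AvoidsPattern w [3, 1, 4, 2]} with hS
  have hfin : S.Finite := by
    refine Set.Finite.subset (List.finite_toSet ((List.range' 1 n).permutations)) ?_
    rintro w ⟨hlen, hperm, -⟩
    simp only [List.mem_permutations, Set.mem_setOf_eq, List.coe_toFinset]
    rw [IsPermWord, hlen] at hperm
    exact hperm
  have hsub : ↑(F n) ⊆ S := by
    intro w hw
    exact Fprop n w hw
  calc r n ≤ (F n).card := key
    _ = Nat.card {x // x ∈ F n} := (Nat.card_eq_finsetCard _).symm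
    _ ≤ Nat.card S := Nat.card_mono hfin hsub
end

section
/- Let T = (P,B) be a template of length t whose binary string B has exactly k zeros, and let σ be a pattern of length l > 0. If there exists an n such that R_{n,T} contains a permutation which contains σ as a pattern, then there also exists an m ≤ (l-1)(k+1)+1 such that R_{m,T} contains a permutation which contains σ as a pattern. -/
/-- Membership in the family of permutation-word sets `R_{n,T}` generated by the
template `T = (P, B)` (the length index `n` is just the length of the word).
`InR P B w` holds iff `w` is the empty word, a single-letter word, or the
concatenation of subwords `W_1, ..., W_t` (`t = |P|`, total length at least `2`) such that:
whenever `p_i > p_j` every element of `W_i` exceeds every element of `W_j`;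
each `W_i` is order-isomorphic to a permutation word `V_i` that again satisfies `InR`;
and whenever `b_i = 0` the subword `W_i` has exactly one element. -/
inductive InR (P : List ℕ) (B : List Bool) : List ℕ → Prop where
  | nil : InR P B []
  | single (x : ℕ) : InR P B [x]
  | join (Ws Vs : List (List ℕ)) (hlen : Ws.length = P.length)
      (hVs : Vs.length = Ws.length)
      (h2 : 2 ≤ Ws.flatten.length)
      (horder : ∀ (i j : ℕ) (hi : i < Ws.length) (hj : j < Ws.length),
          P[j]'(by omega) < P[i]'(by omega) →
          ∀ x ∈ Ws[i]'hi, ∀ y ∈ Ws[j]'hj, y < x)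
      (hiso : ∀ (i : ℕ) (hi : i < Ws.length),
          IsPermWord (Vs[i]'(by omega)) ∧ OrderIsoWord (Ws[i]'hi) (Vs[i]'(by omega)))
      (hrec : ∀ (i : ℕ) (hi : i < Vs.length), InR P B (Vs[i]'hi))
      (hzero : ∀ (i : ℕ) (hi : i < Ws.length) (hb : i < B.length),
          B[i]'hb = false → (Ws[i]'hi).length = 1) :
      InR P B Ws.flatten

/-- The set `R_{n,T}` of permutation words of length `n` generated by the template `T = (P,B)`. -/
def Rset (P : List ℕ) (B : List Bool) (n : ℕ) : Set (List ℕ) :=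
  {w | w.length = n ∧ IsPermWord w ∧ InR P B w}

open List

namespace OrderIsoWord

theorem refl (u : List ℕ) : OrderIsoWord u u := ⟨rfl, fun _ _ _ _ _ _ => Iff.rfl⟩

theorem symm {u v : List ℕ} (h : OrderIsoWord u v) : OrderIsoWord v u :=
  ⟨h.1.symm, fun i j hi hj hi' hj' => (h.2 i j hi' hj' hi hj).symm⟩

theorem trans {u v w : List ℕ} (h₁ : OrderIsoWord u v) (h₂ : OrderIsoWord v w) :
    OrderIsoWord u w :=
  ⟨h₁.1.trans h₂.1, fun i j hi hj hi' hj' =>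
    (h₁.2 i j hi hj (h₁.1 ▸ hi) (h₁.1 ▸ hj)).trans (h₂.2 i j _ _ hi' hj')⟩

theorem map_add (u : List ℕ) (c : ℕ) : OrderIsoWord (u.map (· + c)) u :=
  ⟨u.length_map _, fun _ _ _ _ _ _ => by simp⟩

theorem of_length_le_one {u v : List ℕ} (h : u.length = v.length) (hu : u.length ≤ 1) :
    OrderIsoWord u v :=
  ⟨h, fun i j _ _ _ _ => by
    obtain rfl : i = j := by omega
    simp⟩

end OrderIsoWord

def Concordant (p q : ℕ × ℕ) : Prop := (p.1 < q.1 ↔ p.2 < q.2) ∧ (q.1 < p.1 ↔ q.2 < p.2)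

theorem orderIsoWord_iff_pairwise_zip {u v : List ℕ} :
    OrderIsoWord u v ↔ u.length = v.length ∧ (u.zip v).Pairwise Concordant := by
  refine ⟨fun h => ⟨h.1, List.pairwise_iff_getElem.2 fun i j hi hj _ => ?_⟩,
    fun ⟨hlen, h⟩ => ⟨hlen, fun i j hi hj hi' hj' => ?_⟩⟩
  · simp only [List.length_zip] at hi hj
    simp only [List.getElem_zip, Concordant]
    exact ⟨h.2 i j _ _ _ _, h.2 j i _ _ _ _⟩
  · have hget := List.pairwise_iff_getElem.1 h
    rcases lt_trichotomy i j with hij | rfl | hij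
    · have := (hget i j (by simp; omega) (by simp; omega) hij).1
      simp only [List.getElem_zip] at this
      exact this
    · simp
    · have := (hget j i (by simp; omega) (by simp; omega) hij).2
      simp only [List.getElem_zip] at this
      exact this

theorem List.zip_flatten_ofFn {α β : Type*} {n : ℕ} {A : Fin n → List α}
    {B : Fin n → List β} (h : ∀ i, (A i).length = (B i).length) :
    (List.ofFn A).flatten.zip (List.ofFn B).flatten =
      (List.ofFn fun i => (A i).zip (B i)).flatten := by
  induction n with
  | zero => simp
  | succ n ih => simp [List.ofFn_succ, List.zip_append (h 0), ih fun i => h i.succ]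

theorem List.sublist_flatten_ofFn_iff {α : Type*} {n : ℕ} {W : Fin n → List α} {s : List α} :
    s <+ (List.ofFn W).flatten ↔
      ∃ S : Fin n → List α, (∀ i, S i <+ W i) ∧ s = (List.ofFn S).flatten := by
  induction n generalizing s with
  | zero => simp
  | succ n ih =>
    simp only [List.ofFn_succ, List.flatten_cons, List.sublist_append_iff, ih]
    constructor
    · rintro ⟨s₀, _, rfl, h₀, S, hS, rfl⟩
      exact ⟨Fin.cons s₀ S, Fin.cases h₀ hS, by simp⟩
    · rintro ⟨S, hS, rfl⟩
      exact ⟨S 0, _, rfl, hS 0, fun i => S i.succ, fun i => hS i.succ, rfl⟩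

namespace ContainsPattern

theorem of_sublist {s w : List ℕ} (h : s <+ w) : ContainsPattern w s := ⟨s, h, .refl s⟩

theorem length_le {w σ : List ℕ} (h : ContainsPattern w σ) : σ.length ≤ w.length :=
  let ⟨_, hs, hsσ⟩ := h
  hsσ.1 ▸ hs.length_le

theorem congr_pattern {w s σ : List ℕ} (h : ContainsPattern w s) (hsσ : OrderIsoWord s σ) :
    ContainsPattern w σ :=
  let ⟨t, ht, hts⟩ := h
  ⟨t, ht, hts.trans hsσ⟩

theorem congr_word {w v σ : List ℕ} (h : ContainsPattern w σ) (hwv : OrderIsoWord w v) :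
    ContainsPattern v σ := by
  obtain ⟨s, hs, hsσ⟩ := h
  obtain ⟨hlen, hzip⟩ := orderIsoWord_iff_pairwise_zip.1 hwv
  rw [← List.map_fst_zip hlen.le, List.sublist_map_iff] at hs
  obtain ⟨z, hz, rfl⟩ := hs
  refine ⟨z.map Prod.snd, by simpa [List.map_snd_zip hlen.ge] using hz.map Prod.snd, ?_⟩
  have hunzip : (z.map Prod.fst).zip (z.map Prod.snd) = z := by simpa using List.zip_unzip z
  refine OrderIsoWord.trans (OrderIsoWord.symm ?_) hsσ
  exact orderIsoWord_iff_pairwise_zip.2 ⟨by simp, by rw [hunzip]; exact hzip.sublist hz⟩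

theorem singleton (x : ℕ) {σ : List ℕ} (hσ : σ.length ≤ 1) : ContainsPattern [x] σ :=
  ⟨[x].take σ.length, List.take_sublist _ _,
    .of_length_le_one (by simp [hσ]) (by simp)⟩

end ContainsPattern

theorem isPermWord_iff {w : List ℕ} :
    IsPermWord w ↔ w.Nodup ∧ ∀ x ∈ w, 1 ≤ x ∧ x ≤ w.length := by
  constructor
  · intro h
    refine ⟨h.nodup_iff.2 List.nodup_range', fun x hx => ?_⟩
    have := List.mem_range'_1.1 (h.subset hx)
    omega
  · rintro ⟨hnd, hrange⟩
    refine (List.subperm_of_subset hnd fun x hx => ?_).perm_of_length_le (by simp)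
    have := hrange x hx
    exact List.mem_range'_1.2 (by omega)

theorem isPermWord_singleton : IsPermWord [1] := by simp [IsPermWord]

section Inflation

variable {P : List ℕ}

def BlocksOrderedBy (P : List ℕ) (A : Fin P.length → List ℕ) : Prop :=
  ∀ i j : Fin P.length, P[i] < P[j] → ∀ x ∈ A i, ∀ y ∈ A j, x < y

theorem BlocksOrderedBy.mono {A A' : Fin P.length → List ℕ} (h : BlocksOrderedBy P A)
    (hA' : ∀ i, A' i ⊆ A i) : BlocksOrderedBy P A' :=
  fun i j hij x hx y hy => h i j hij x (hA' i hx) y (hA' j hy)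

theorem List.Nodup.getElem_fin_ne (hP : P.Nodup) {i j : Fin P.length} (hij : i ≠ j) :
    P[i] ≠ P[j] :=
  fun h => hij (Fin.ext (hP.getElem_inj_iff.1 h))

theorem BlocksOrderedBy.disjoint {A : Fin P.length → List ℕ} (h : BlocksOrderedBy P A)
    (hP : P.Nodup) {i j : Fin P.length} (hij : i ≠ j) : (A i).Disjoint (A j) := by
  intro x hxi hxj
  rcases lt_or_gt_of_ne (hP.getElem_fin_ne hij) with hlt | hlt
  · exact lt_irrefl x (h i j hlt x hxi x hxj)
  · exact lt_irrefl x (h j i hlt x hxj x hxi)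

theorem BlocksOrderedBy.orderIsoWord_flatten {A A' : Fin P.length → List ℕ} (hP : P.Nodup)
    (hA : BlocksOrderedBy P A) (hA' : BlocksOrderedBy P A') (h : ∀ i, OrderIsoWord (A i) (A' i)) :
    OrderIsoWord (List.ofFn A).flatten (List.ofFn A').flatten := by
  have hlen i : (A i).length = (A' i).length := (h i).1
  rw [orderIsoWord_iff_pairwise_zip, List.zip_flatten_ofFn hlen,
    List.pairwise_flatten, List.pairwise_ofFn]
  refine ⟨by simp [List.length_flatten, Function.comp_def, hlen], ?_,
    fun i j hij p hp q hq => ?_⟩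
  · simpa using fun i => (orderIsoWord_iff_pairwise_zip.1 (h i)).2
  · obtain ⟨hp₁, hp₂⟩ := List.of_mem_zip hp
    obtain ⟨hq₁, hq₂⟩ := List.of_mem_zip hq
    rcases lt_or_gt_of_ne (hP.getElem_fin_ne hij.ne) with hlt | hlt
    · exact ⟨iff_of_true (hA i j hlt _ hp₁ _ hq₁) (hA' i j hlt _ hp₂ _ hq₂),
        iff_of_false (hA i j hlt _ hp₁ _ hq₁).not_gt (hA' i j hlt _ hp₂ _ hq₂).not_gt⟩
    · exact ⟨iff_of_false (hA j i hlt _ hq₁ _ hp₁).not_gt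
          (hA' j i hlt _ hq₂ _ hp₂).not_gt,
        iff_of_true (hA j i hlt _ hq₁ _ hp₁) (hA' j i hlt _ hq₂ _ hp₂)⟩

/-- In an inflation of `P` by blocks of lengths `m`, block `i` sits just above the blocks of
the letters of `P` smaller than `P[i]`. -/
def offset (P : List ℕ) (m : Fin P.length → ℕ) (i : Fin P.length) : ℕ :=
  ∑ j with P[j] < P[i], m j

theorem offset_add_le_of_lt (m : Fin P.length → ℕ) {i j : Fin P.length} (hij : P[i] < P[j]) :
    offset P m i + m i ≤ offset P m j := by
  rw [offset, add_comm, ← Finset.sum_insert (by simp)]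
  refine Finset.sum_le_sum_of_subset fun a ha => ?_
  simp only [Finset.mem_insert, Finset.mem_filter, Finset.mem_univ, true_and] at ha ⊢
  rcases ha with rfl | ha
  exacts [hij, ha.trans hij]

theorem offset_add_le_sum (m : Fin P.length → ℕ) (i : Fin P.length) :
    offset P m i + m i ≤ ∑ j, m j := by
  rw [offset, add_comm, ← Finset.sum_insert (by simp)]
  exact Finset.sum_le_sum_of_subset (Finset.subset_univ _)

def shiftBlocks (P : List ℕ) (m : Fin P.length → ℕ) (A : Fin P.length → List ℕ)
    (i : Fin P.length) : List ℕ :=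
  (A i).map (· + offset P m i)

theorem blocksOrderedBy_shiftBlocks {m : Fin P.length → ℕ} {A : Fin P.length → List ℕ}
    (hA : ∀ i, ∀ x ∈ A i, 1 ≤ x ∧ x ≤ m i) : BlocksOrderedBy P (shiftBlocks P m A) := by
  intro i j hij x hx y hy
  simp only [shiftBlocks, List.mem_map] at hx hy
  obtain ⟨a, ha, rfl⟩ := hx
  obtain ⟨b, hb, rfl⟩ := hy
  have := offset_add_le_of_lt m hij
  have := hA i a ha
  have := hA j b hb
  omega

def inflate (P : List ℕ) (U : Fin P.length → List ℕ) : List ℕ :=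
  (List.ofFn (shiftBlocks P (fun i => (U i).length) U)).flatten

theorem length_inflate (U : Fin P.length → List ℕ) :
    (inflate P U).length = ∑ i, (U i).length := by
  simp [inflate, shiftBlocks, List.length_flatten, List.sum_ofFn]

theorem isPermWord_inflate (hP : P.Nodup) {U : Fin P.length → List ℕ}
    (hU : ∀ i, IsPermWord (U i)) : IsPermWord (inflate P U) := by
  have hUrange i := (isPermWord_iff.1 (hU i)).2
  rw [isPermWord_iff, length_inflate]
  refine ⟨List.nodup_flatten.2 ⟨List.forall_mem_ofFn_iff.2 fun i => ?_, List.pairwise_ofFn.2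
    fun i j hij => (blocksOrderedBy_shiftBlocks hUrange).disjoint hP hij.ne⟩, fun x hx => ?_⟩
  · exact (isPermWord_iff.1 (hU i)).1.map (add_left_injective _)
  · simp only [inflate, List.mem_flatten, List.mem_ofFn] at hx
    obtain ⟨_, ⟨i, rfl⟩, hx⟩ := hx
    obtain ⟨a, ha, rfl⟩ := List.mem_map.1 hx
    have := offset_add_le_sum (fun i => (U i).length) i
    have := hUrange i a ha
    omega

theorem inR_inflate {B : List Bool} {U : Fin P.length → List ℕ} (hU : ∀ i, IsPermWord (U i))
    (hUR : ∀ i, InR P B (U i))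
    (hforced : ∀ i : Fin P.length, B[i.val]? = some false → (U i).length = 1)
    (h2 : 2 ≤ (inflate P U).length) : InR P B (inflate P U) := by
  have hord := blocksOrderedBy_shiftBlocks fun i => (isPermWord_iff.1 (hU i)).2
  refine InR.join _ (List.ofFn U) List.length_ofFn (by simp) h2 ?_ ?_ ?_ ?_
  · intro i j hi hj hij x hx y hy
    simp only [List.getElem_ofFn] at hx hy
    exact hord ⟨j, _⟩ ⟨i, _⟩ hij y hy x hx
  · intro i hi
    simpa [shiftBlocks] using ⟨hU _, OrderIsoWord.map_add _ _⟩
  · intro i hi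
    simpa using hUR _
  · intro i hi hb hfalse
    simpa [shiftBlocks] using hforced ⟨i, _⟩ (List.getElem?_eq_some_iff.2 ⟨hb, hfalse⟩)

theorem containsPattern_inflate (hP : P.Nodup) {U W : Fin P.length → List ℕ}
    (hU : ∀ i, IsPermWord (U i)) (hW : BlocksOrderedBy P W)
    (hUW : ∀ i, ContainsPattern (U i) (W i)) :
    ContainsPattern (inflate P U) (List.ofFn W).flatten := by
  choose S hSU hSW using hUW
  have hS : ∀ i, ∀ x ∈ S i, 1 ≤ x ∧ x ≤ (U i).length :=
    fun i x hx => (isPermWord_iff.1 (hU i)).2 x ((hSU i).subset hx)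
  refine ⟨(List.ofFn (shiftBlocks P (fun i => (U i).length) S)).flatten,
    List.sublist_flatten_ofFn_iff.2 ⟨_, fun i => (hSU i).map _, rfl⟩, ?_⟩
  exact (blocksOrderedBy_shiftBlocks hS).orderIsoWord_flatten hP hW
    fun i => (OrderIsoWord.map_add _ _).trans (hSW i)

end Inflation

section Counting

theorem two_le_card_filter_ne_zero {ι : Type*} [Fintype ι] {c : ι → ℕ}
    (hpos : 0 < ∑ i, c i) (hc : ∀ i, c i < ∑ j, c j) :
    2 ≤ (Finset.univ.filter fun i => c i ≠ 0).card := by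
  by_contra! h
  obtain ⟨i, -, hi⟩ := Finset.exists_ne_zero_of_sum_ne_zero hpos.ne'
  have hsingle : ∑ j, c j = c i := by
    refine Finset.sum_eq_single i (fun j _ hji => ?_) (by simp)
    by_contra hj
    exact hji (Finset.card_le_one.1 (Nat.lt_succ_iff.1 h) j (by simpa) i (by simpa))
  exact (hc i).ne hsingle.symm

/-- A bound for the length of the word replacing a block whose part of the copy has length
`c`: a forced singleton block stays a singleton, an unused block disappears. -/
def blockBound (k : ℕ) (forced : Prop) [Decidable forced] (c : ℕ) : ℕ :=
  if forced then 1 else if c = 0 then 0 else (c - 1) * (k + 1) + 1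

theorem sum_le_of_le_blockBound {ι : Type*} [Fintype ι] [DecidableEq ι] {k : ℕ}
    (z : Finset ι) (hz : z.card ≤ k) {c m : ι → ℕ} (hpos : 0 < ∑ i, c i)
    (hc : ∀ i, c i < ∑ j, c j) (hm : ∀ i, m i ≤ blockBound k (i ∈ z) (c i)) :
    ∑ i, m i ≤ (∑ i, c i - 1) * (k + 1) + 1 := by
  -- each block used by the copy saves `k` against the crude bound `(k + 1) c_i`
  have hpoint : ∀ i, m i + k * (if c i ≠ 0 then 1 else 0) ≤
      (if i ∈ z then 1 else 0) + (k + 1) * c i := by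
    intro i
    have hmi := hm i
    unfold blockBound at hmi
    cases hci : c i with
    | zero => split_ifs at hmi ⊢ <;> simp_all
    | succ c' => split_ifs at hmi ⊢ <;> simp_all <;> nlinarith
  have hsum := Finset.sum_le_sum fun i (_ : i ∈ Finset.univ) => hpoint i
  simp only [Finset.sum_add_distrib, ← Finset.mul_sum, Finset.sum_boole, Nat.cast_id,
    Finset.filter_mem_eq_inter, Finset.univ_inter] at hsum
  have htwo := Nat.mul_le_mul_left k (two_le_card_filter_ne_zero hpos hc)
  obtain ⟨L, hL⟩ : ∃ L, ∑ i, c i = L + 1 := ⟨_, (Nat.succ_pred_eq_of_pos hpos).symm⟩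
  rw [hL] at hsum ⊢
  rw [Nat.add_sub_cancel]
  nlinarith

theorem card_filter_getElem?_eq_some_le_count {α : Type*} [DecidableEq α] (B : List α)
    (a : α) (n : ℕ) :
    (Finset.univ.filter fun i : Fin n => B[i.val]? = some a).card ≤ B.count a := by
  induction B generalizing n with
  | nil => simp
  | cons b B ih =>
    cases n with
    | zero => simp
    | succ n =>
      rw [Fin.card_filter_univ_succ]
      have := ih n
      simp only [Fin.val_zero, List.getElem?_cons_zero, Option.some.injEq, Fin.val_succ,
        List.getElem?_cons_succ, List.count_cons, beq_iff_eq]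
      split_ifs <;> omega

end Counting

section ShortWitness

variable {P : List ℕ} {B : List Bool}

def OccursWithin (P : List ℕ) (B : List Bool) (σ : List ℕ) (n : ℕ) : Prop :=
  ∃ m ≤ n, ∃ w ∈ Rset P B m, ContainsPattern w σ

theorem occursWithin_of_length_le_one {σ : List ℕ} (hσ : σ.length ≤ 1) (n : ℕ) :
    OccursWithin P B σ (n + 1) :=
  ⟨1, by omega, [1], ⟨rfl, isPermWord_singleton, .single 1⟩, .singleton 1 hσ⟩

theorem exists_block_replacement {k : ℕ} (forced : Prop) [Decidable forced] {S W : List ℕ}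
    (hSW : S <+ W) (hforced : forced → W.length = 1)
    (hW : ∀ τ, ContainsPattern W τ → OccursWithin P B τ ((τ.length - 1) * (k + 1) + 1)) :
    ∃ u, IsPermWord u ∧ InR P B u ∧ ContainsPattern u S ∧ (forced → u.length = 1) ∧
      u.length ≤ blockBound k forced S.length := by
  by_cases hf : forced
  · refine ⟨[1], isPermWord_singleton, .single 1, .singleton 1 ?_, fun _ => rfl,
      by simp [blockBound, hf]⟩
    exact hforced hf ▸ hSW.length_le
  rcases eq_or_ne S [] with rfl | hS
  · exact ⟨[], by simp [IsPermWord], .nil, .of_sublist (List.nil_sublist _), hf.elim,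
      by simp [blockBound]⟩
  · obtain ⟨_, hn, u, ⟨rfl, hu, huR⟩, huS⟩ := hW S (.of_sublist hSW)
    exact ⟨u, hu, huR, huS, hf.elim, by simpa [blockBound, hf, hS] using hn⟩

theorem occursWithin_of_copy_across_blocks (hP : P.Nodup) {W S : Fin P.length → List ℕ}
    {σ : List ℕ} (hW : BlocksOrderedBy P W)
    (hforced : ∀ i : Fin P.length, B[i.val]? = some false → (W i).length = 1)
    (hWσ : ∀ i τ, ContainsPattern (W i) τ →
      OccursWithin P B τ ((τ.length - 1) * (B.count false + 1) + 1))
    (hSW : ∀ i, S i <+ W i) (hSσ : OrderIsoWord (List.ofFn S).flatten σ)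
    (hσ : 1 < σ.length) (hS : ∀ i, (S i).length < σ.length) :
    OccursWithin P B σ ((σ.length - 1) * (B.count false + 1) + 1) := by
  set z := Finset.univ.filter fun i : Fin P.length => B[i.val]? = some false
  have hblock i := exists_block_replacement (k := B.count false) (i ∈ z) (hSW i)
    (fun hi => hforced i (Finset.mem_filter.1 hi).2) (hWσ i)
  choose U hU hUR hUS hUforced hUlen using hblock
  have hcopy : ContainsPattern (inflate P U) σ :=
    (containsPattern_inflate hP hU (hW.mono fun i => (hSW i).subset) hUS).congr_pattern hSσ
  have hlenσ : ∑ i, (S i).length = σ.length := by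
    rw [← hSσ.1]
    simp [List.length_flatten, List.sum_ofFn]
  refine ⟨_, ?_, inflate P U, ⟨rfl, isPermWord_inflate hP hU, inR_inflate hU hUR
    (fun i hi => hUforced i (by simpa [z] using hi)) (hσ.trans_le hcopy.length_le)⟩, hcopy⟩
  rw [length_inflate, ← hlenσ]
  exact sum_le_of_le_blockBound z (card_filter_getElem?_eq_some_le_count B false _) (by omega)
    (fun i => hlenσ ▸ hS i) hUlen

theorem InR.occursWithin (hP : P.Nodup) {w : List ℕ} (hw : InR P B w) (σ : List ℕ)
    (hwσ : ContainsPattern w σ) :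
    OccursWithin P B σ ((σ.length - 1) * (B.count false + 1) + 1) := by
  induction hw generalizing σ with
  | nil => exact occursWithin_of_length_le_one (hwσ.length_le.trans (Nat.zero_le 1)) _
  | single => exact occursWithin_of_length_le_one hwσ.length_le _
  | join Ws Vs hlen hVs _ horder hiso _ hzero ih =>
    rcases le_or_gt σ.length 1 with hσ | hσ
    · exact occursWithin_of_length_le_one hσ _
    obtain ⟨s, hsw, hsσ⟩ := hwσ
    set W : Fin P.length → List ℕ := fun i => Ws[i.val]
    have hWs : Ws = List.ofFn W := List.ext_getElem (by simp [hlen]) fun _ _ _ => by simp [W]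
    rw [hWs, List.sublist_flatten_ofFn_iff] at hsw
    obtain ⟨S, hSW, rfl⟩ := hsw
    have hWσ i τ (hτ : ContainsPattern (W i) τ) :=
      ih i (by omega) τ (hτ.congr_word (hiso i (by omega)).2)
    have hSs i : S i <+ (List.ofFn S).flatten :=
      List.sublist_flatten_of_mem (List.mem_ofFn.2 ⟨i, rfl⟩)
    by_cases hsingle : ∃ i, (S i).length = σ.length
    · obtain ⟨i, hi⟩ := hsingle
      have hSi : S i = (List.ofFn S).flatten := (hSs i).eq_of_length (hi.trans hsσ.1.symm)
      exact hWσ i σ ⟨S i, hSW i, hSi ▸ hsσ⟩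
    push Not at hsingle
    refine occursWithin_of_copy_across_blocks hP
      (fun i j hij x hx y hy => horder j i (by omega) (by omega) hij y hy x hx)
      (fun i hi => ?_) hWσ hSW hsσ hσ
      (fun i => lt_of_le_of_ne (hsσ.1 ▸ (hSs i).length_le) (hsingle i))
    obtain ⟨hb, hfalse⟩ := List.getElem?_eq_some_iff.1 hi
    exact hzero i (by omega) hb hfalse

end ShortWitness

theorem template_pattern_small_witness_general
    (P : List ℕ) (B : List Bool) (hP : IsPermWord P)
    (k : ℕ) (hk : B.count false = k)
    (σ : List ℕ) (l : ℕ) (hl : σ.length = l)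
    (hex : ∃ n : ℕ, ∃ w ∈ Rset P B n, ContainsPattern w σ) :
    ∃ m ≤ (l - 1) * (k + 1) + 1, ∃ w ∈ Rset P B m, ContainsPattern w σ := by
  obtain ⟨n, w, ⟨-, -, hw⟩, hwσ⟩ := hex
  subst hk hl
  exact hw.occursWithin (isPermWord_iff.1 hP).1 σ hwσ

/-- Let `T = (P, B)` be a template whose binary string `B` has exactly
`k` zeros, and let `σ` be a pattern of length `l > 0`.  If for some `n` the set `R_{n,T}`
contains a permutation containing `σ` as a pattern, then for some `m ≤ (l-1)(k+1)+1` the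
set `R_{m,T}` also contains a permutation containing `σ` as a pattern. -/
theorem template_pattern_small_witness
    (P : List ℕ) (B : List Bool) (hP : IsPermWord P) (hP1 : 1 ≤ P.length)
    (hPB : B.length = P.length)
    (k : ℕ) (hk : B.count false = k)
    (σ : List ℕ) (hσ : IsPermWord σ) (l : ℕ) (hl : σ.length = l) (hl0 : 0 < l)
    (hex : ∃ n : ℕ, ∃ w ∈ Rset P B n, ContainsPattern w σ) :
    ∃ m ≤ (l - 1) * (k + 1) + 1, ∃ w ∈ Rset P B m, ContainsPattern w σ :=
  template_pattern_small_witness_general P B hP k hk σ l hl hex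
end

section
/- Let T be the template (45312, 10101), and define the sequence (r_n) by r_0 = r_1 = 1 and, for n > 1, r_n = Σ_{i=1}^{n-1} Σ_{j=i+1}^{n} r_{i-1}·r_{j-i-1}·r_{n-j}. Then |R_{n,T}| = r_n for all n ≥ 0. -/
/-!
For `n ≥ 2` a word of `R_{n,T}` is an inflation `45312[u, 1, v, 1, x]`: the two blocks with
`b_i = 0` are single letters, the template order forces them to be `n` and `1` and stacks the
other three blocks as consecutive value intervals, and a block filling a value interval is the
translate of its (unique) order-isomorphic permutation word `u`, `v` or `x ∈ R`. Conversely each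
such inflation lies in `R_{n,T}`, and the positions of `n` and `1` recover `|u|` and `|v|`, so
inflation is a bijection from the triples with `|u| = i - 1`, `|v| = j - i - 1`, `|x| = n - j`
onto `R_{n,T}`, which is the recursion for `r n`.
-/

namespace List

theorem countP_lt_range' {s n t : ℕ} (h₁ : s ≤ t) (h₂ : t ≤ s + n) :
    (range' s n).countP (· < t) = t - s := by
  obtain ⟨k, rfl⟩ := Nat.exists_eq_add_of_le h₁
  obtain ⟨m, rfl⟩ := Nat.exists_eq_add_of_le (show k ≤ n by omega)
  rw [← range'_append_1, countP_append, countP_eq_length.2, countP_eq_zero.2] <;> simp_all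

theorem getElem_eq_add_countP_lt {L : List ℕ} {s : ℕ} (h : L ~ range' s L.length)
    {i : ℕ} (hi : i < L.length) : L[i] = s + L.countP (· < L[i]) := by
  have hmem := h.subset (getElem_mem hi)
  rw [mem_range'_1] at hmem
  rw [h.countP_eq, countP_lt_range' hmem.1 hmem.2.le]
  omega

theorem Perm.map_add_range' {u : List ℕ} {s n : ℕ} (h : u ~ range' s n) (k : ℕ) :
    u.map (· + k) ~ range' (s + k) n := by
  convert h.map (k + ·) using 1
  · exact map_congr_left fun _ _ => Nat.add_comm _ _
  · rw [List.map_add_range', Nat.add_comm]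

theorem Perm.append_range' {A B : List ℕ} {s k a b : ℕ} (hA : A ~ range' s a)
    (hB : B ~ range' k b) (hs : s = k + b) : A ++ B ~ range' k (b + a) := by
  subst hs
  rw [← range'_append_1]
  exact (hA.append hB).trans perm_append_comm

theorem Perm.range'_of_append {A B : List ℕ} {k m : ℕ} (h : A ++ B ~ range' k m)
    (hBA : ∀ a ∈ A, ∀ b ∈ B, b < a) :
    A ~ range' (k + B.length) A.length ∧ B ~ range' k B.length := by
  have hm : m = B.length + A.length := by simpa [Nat.add_comm] using h.length_eq.symm
  have hnd := nodup_append.1 (h.nodup_iff.2 nodup_range')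
  have hmem : ∀ z ∈ A ++ B, k ≤ z ∧ z < k + m := fun z hz => mem_range'_1.1 (h.subset hz)
  -- Otherwise the nodup list `B` would fit into `[k, a)`, which is too short.
  have hA_ge : ∀ a ∈ A, k + B.length ≤ a := by
    intro a ha
    by_contra hlt
    have := hmem a (mem_append_left _ ha)
    have hsub : B <+~ range' k (a - k) := hnd.2.1.subperm fun b hb => by
      have := hmem b (mem_append_right _ hb)
      have := hBA a ha b hb
      simp only [mem_range'_1]; omega
    have := hsub.length_le
    simp only [length_range'] at this
    omega
  have hA : A ~ range' (k + B.length) A.length :=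
    (hnd.1.subperm fun a ha => by
      have := hmem a (mem_append_left _ ha)
      have := hA_ge a ha
      simp only [mem_range'_1]; omega).perm_of_length_le (by simp)
  refine ⟨hA, (perm_append_left_iff A).1 (h.trans ?_)⟩
  rw [hm]
  exact (hA.append_range' (Perm.refl _) rfl).symm

end List

open List

theorem OrderIsoWord.countP_lt_eq {u v : List ℕ} (h : OrderIsoWord u v) {i : ℕ}
    (hu : i < u.length) (hv : i < v.length) :
    u.countP (· < u[i]) = v.countP (· < v[i]) := by
  have key : (u.zip v).countP (fun q => q.1 < u[i]) = (u.zip v).countP (fun q => q.2 < v[i]) := by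
    refine countP_congr fun q hq => ?_
    obtain ⟨j, hj, rfl⟩ := mem_iff_getElem.1 hq
    simp only [getElem_zip, length_zip] at hj ⊢
    simpa using h.2 j i (by omega) hu (by omega) hv
  generalize u[i] = a at key ⊢
  generalize v[i] = b at key ⊢
  conv_lhs => rw [← map_fst_zip (l₂ := v) h.1.le]
  conv_rhs => rw [← map_snd_zip (l₁ := u) h.1.ge]
  rwa [countP_map, countP_map]

theorem OrderIsoWord.eq_of_perm_range' {u v : List ℕ} {s : ℕ} (hu : u ~ range' s u.length)
    (hv : v ~ range' s v.length) (h : OrderIsoWord u v) : u = v :=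
  ext_getElem h.1 fun i hui hvi => by
    rw [getElem_eq_add_countP_lt hu, getElem_eq_add_countP_lt hv, h.countP_lt_eq hui hvi]

theorem OrderIsoWord.map_add_right {u v : List ℕ} (h : OrderIsoWord u v) (k : ℕ) :
    OrderIsoWord u (v.map (· + k)) :=
  ⟨by simp [h.1], fun i j hi hj hi' hj' => by
    simpa using h.2 i j hi hj (by simpa using hi') (by simpa using hj')⟩

theorem orderIsoWord_map_add (u : List ℕ) (k : ℕ) : OrderIsoWord (u.map (· + k)) u :=
  ⟨by simp, fun i j hi hj _ _ => by simp⟩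

theorem orderIsoWord_singleton (a b : ℕ) : OrderIsoWord [a] [b] :=
  ⟨rfl, fun i j hi hj _ _ => by
    simp only [length_singleton, Nat.lt_one_iff] at hi hj
    subst hi hj
    simp⟩

theorem isPermWord_singleton_iff {a : ℕ} : IsPermWord [a] ↔ a = 1 := by
  simp [IsPermWord]

theorem eq_map_add_of_orderIsoWord {w v : List ℕ} {k : ℕ} (hw : w ~ range' (k + 1) w.length)
    (hv : IsPermWord v) (h : OrderIsoWord w v) : w = v.map (· + k) :=
  (h.map_add_right k).eq_of_perm_range' hw (by simpa [Nat.add_comm, h.1] using hv.map_add_range' k)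

theorem finite_Rset (P : List ℕ) (B : List Bool) (n : ℕ) : (Rset P B n).Finite :=
  (range' 1 n).permutations.finite_toSet.subset fun _ ⟨hn, hw, _⟩ =>
    mem_permutations.2 (hn ▸ hw)

theorem Rset_zero (P : List ℕ) (B : List Bool) : Rset P B 0 = {[]} := by
  ext w
  constructor
  · rintro ⟨h, -, -⟩
    exact length_eq_zero_iff.1 h
  · rintro rfl
    exact ⟨rfl, Perm.refl _, InR.nil⟩

theorem Rset_one (P : List ℕ) (B : List Bool) : Rset P B 1 = {[1]} := by
  ext w
  constructor
  · rintro ⟨h, hw, -⟩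
    obtain ⟨a, rfl⟩ := length_eq_one_iff.1 h
    rw [isPermWord_singleton_iff.1 hw]
    rfl
  · rintro rfl
    exact ⟨rfl, isPermWord_singleton_iff.2 rfl, InR.single 1⟩

namespace Template45312

abbrev P : List ℕ := [4, 5, 3, 1, 2]
abbrev B : List Bool := [true, false, true, false, true]

def inflate (u v x : List ℕ) : List ℕ :=
  [u.map (· + (v.length + x.length + 1)), [u.length + v.length + x.length + 2],
    v.map (· + (x.length + 1)), [1], x.map (· + 1)].flatten

theorem length_inflate (u v x : List ℕ) :
    (inflate u v x).length = u.length + v.length + x.length + 2 := by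
  simp [inflate]; omega

-- The blocks reordered by decreasing template letter `5, 4, 3, 2, 1`.
theorem flatten_perm_desc (W₁ W₃ W₅ : List ℕ) (m₂ m₄ : ℕ) :
    [W₁, [m₂], W₃, [m₄], W₅].flatten ~ [m₂] ++ (W₁ ++ (W₃ ++ (W₅ ++ [m₄]))) := by
  simp only [flatten_cons, flatten_nil, append_nil, perm_iff_count, count_append,
    count_singleton]
  intro a; omega

theorem isPermWord_inflate {u v x : List ℕ} (hu : IsPermWord u) (hv : IsPermWord v)
    (hx : IsPermWord x) : IsPermWord (inflate u v x) := by
  have h₅ := (hx.map_add_range' 1).append_range' (Perm.refl [1]) rfl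
  have h₃ := (hv.map_add_range' (x.length + 1)).append_range' h₅ (by omega)
  have h₁ := (hu.map_add_range' (v.length + x.length + 1)).append_range' h₃ (by omega)
  have h := (Perm.refl (range' (u.length + v.length + x.length + 2) 1)).append_range' h₁
    (by omega)
  rw [IsPermWord, length_inflate, inflate]
  convert (flatten_perm_desc _ _ _ _ _).trans h using 2
  omega

theorem inR_inflate {u v x : List ℕ} (hu : IsPermWord u) (hv : IsPermWord v)
    (hx : IsPermWord x) (hu' : InR P B u) (hv' : InR P B v) (hx' : InR P B x) :
    InR P B (inflate u v x) := by
  set a := u.length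
  set b := v.length
  set c := x.length
  have hbnd : ∀ i (hi : i < 5), ∀ z ∈ ([u.map (· + (b + c + 1)), [a + b + c + 2],
      v.map (· + (c + 1)), [1], x.map (· + 1)] : List (List ℕ))[i],
      [b + c + 2, a + b + c + 2, c + 2, 1, 2][i] ≤ z ∧
        z < [a + b + c + 2, a + b + c + 3, b + c + 2, 2, c + 2][i] := by
    intro i hi z hz
    interval_cases i
    · have := mem_range'_1.1 ((hu.map_add_range' _).subset hz); simp; omega
    · simp_all
    · have := mem_range'_1.1 ((hv.map_add_range' _).subset hz); simp; omega
    · simp_all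
    · have := mem_range'_1.1 ((hx.map_add_range' _).subset hz); simp; omega
  refine InR.join _ [u, [1], v, [1], x] rfl rfl (by simp; omega) ?_ ?_ ?_ ?_
  · intro i j hi hj hP p hp q hq
    have hp' := hbnd i hi p hp
    have hq' := hbnd j hj q hq
    simp only [length_cons, length_nil] at hi hj
    interval_cases i <;> interval_cases j <;>
      simp only [getElem_cons_zero, getElem_cons_succ] at hP hp' hq' <;> omega
  · intro i hi
    simp only [length_cons, length_nil] at hi
    interval_cases i
    · exact ⟨hu, orderIsoWord_map_add u _⟩
    · exact ⟨isPermWord_singleton_iff.2 rfl, orderIsoWord_singleton _ _⟩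
    · exact ⟨hv, orderIsoWord_map_add v _⟩
    · exact ⟨isPermWord_singleton_iff.2 rfl, orderIsoWord_singleton _ _⟩
    · exact ⟨hx, orderIsoWord_map_add x _⟩
  · intro i hi
    simp only [length_cons, length_nil] at hi
    interval_cases i
    exacts [hu', InR.single 1, hv', InR.single 1, hx']
  · intro i hi _ hBi
    simp only [length_cons, length_nil] at hi
    interval_cases i <;> simp_all

theorem eq_inflate_of_lt {W₁ W₃ W₅ V₁ V₃ V₅ : List ℕ} {m₂ m₄ : ℕ}
    (hw : IsPermWord [W₁, [m₂], W₃, [m₄], W₅].flatten)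
    (h₂ : ∀ y ∈ W₁ ++ (W₃ ++ (W₅ ++ [m₄])), y < m₂)
    (h₁ : ∀ z ∈ W₁, ∀ y ∈ W₃ ++ (W₅ ++ [m₄]), y < z)
    (h₃ : ∀ z ∈ W₃, ∀ y ∈ W₅ ++ [m₄], y < z)
    (h₅ : ∀ z ∈ W₅, m₄ < z)
    (hV₁ : IsPermWord V₁) (hV₃ : IsPermWord V₃) (hV₅ : IsPermWord V₅)
    (hi₁ : OrderIsoWord W₁ V₁) (hi₃ : OrderIsoWord W₃ V₃) (hi₅ : OrderIsoWord W₅ V₅) :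
    [W₁, [m₂], W₃, [m₄], W₅].flatten = inflate V₁ V₃ V₅ := by
  obtain ⟨hm₂, hr₁⟩ := ((flatten_perm_desc _ _ _ _ _).symm.trans hw).range'_of_append
    (by simpa using h₂)
  obtain ⟨hW₁, hr₃⟩ := hr₁.range'_of_append h₁
  obtain ⟨hW₃, hr₅⟩ := hr₃.range'_of_append h₃
  obtain ⟨hW₅, hm₄⟩ := hr₅.range'_of_append (by simpa using h₅)
  simp only [length_append, length_cons, length_nil, Nat.zero_add, singleton_perm, range'_one,
    singleton_inj] at hm₂ hW₁ hW₃ hW₅ hm₄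
  have e₁ : W₁ = V₁.map (· + (V₃.length + V₅.length + 1)) :=
    eq_map_add_of_orderIsoWord (by convert hW₁ using 2; rw [← hi₃.1, ← hi₅.1]; omega) hV₁ hi₁
  have e₃ : W₃ = V₃.map (· + (V₅.length + 1)) :=
    eq_map_add_of_orderIsoWord (by convert hW₃ using 2; rw [← hi₅.1]; omega) hV₃ hi₃
  have e₅ : W₅ = V₅.map (· + 1) := eq_map_add_of_orderIsoWord hW₅ hV₅ hi₅
  rw [inflate, ← e₁, ← e₃, ← e₅, hm₂, hm₄, ← hi₁.1, ← hi₃.1, ← hi₅.1]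
  congr 4
  omega

theorem exists_eq_inflate {w : List ℕ} (hw : IsPermWord w) (hR : InR P B w)
    (hlen : 2 ≤ w.length) :
    ∃ u v x, (IsPermWord u ∧ InR P B u) ∧ (IsPermWord v ∧ InR P B v) ∧
      (IsPermWord x ∧ InR P B x) ∧ w = inflate u v x := by
  cases hR with
  | nil => simp at hlen
  | single => simp at hlen
  | join Ws Vs hlenP hVs _ horder hiso hrec hzero =>
    obtain ⟨W₁, W₂, W₃, W₄, W₅, rfl⟩ : ∃ W₁ W₂ W₃ W₄ W₅, Ws = [W₁, W₂, W₃, W₄, W₅] := by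
      match Ws, hlenP with
      | [_, _, _, _, _], _ => exact ⟨_, _, _, _, _, rfl⟩
    obtain ⟨V₁, V₂, V₃, V₄, V₅, rfl⟩ : ∃ V₁ V₂ V₃ V₄ V₅, Vs = [V₁, V₂, V₃, V₄, V₅] := by
      match Vs, hVs with
      | [_, _, _, _, _], _ => exact ⟨_, _, _, _, _, rfl⟩
    obtain ⟨m₂, rfl⟩ := length_eq_one_iff.1 (hzero 1 (by simp) (by simp) rfl)
    obtain ⟨m₄, rfl⟩ := length_eq_one_iff.1 (hzero 3 (by simp) (by simp) rfl)
    have h₂ : ∀ y ∈ W₁ ++ (W₃ ++ (W₅ ++ [m₄])), y < m₂ := by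
      simp only [mem_append, mem_singleton]
      rintro y (hy | hy | hy | rfl)
      exacts [horder 1 0 (by simp) (by simp) (by simp) _ (mem_singleton_self _) _ hy,
        horder 1 2 (by simp) (by simp) (by simp) _ (mem_singleton_self _) _ hy,
        horder 1 4 (by simp) (by simp) (by simp) _ (mem_singleton_self _) _ hy,
        horder 1 3 (by simp) (by simp) (by simp) _ (mem_singleton_self _) _
          (mem_singleton_self _)]
    have h₁ : ∀ z ∈ W₁, ∀ y ∈ W₃ ++ (W₅ ++ [m₄]), y < z := by
      simp only [mem_append, mem_singleton]
      rintro z hz y (hy | hy | rfl)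
      exacts [horder 0 2 (by simp) (by simp) (by simp) _ hz _ hy,
        horder 0 4 (by simp) (by simp) (by simp) _ hz _ hy,
        horder 0 3 (by simp) (by simp) (by simp) _ hz _ (mem_singleton_self _)]
    have h₃ : ∀ z ∈ W₃, ∀ y ∈ W₅ ++ [m₄], y < z := by
      simp only [mem_append, mem_singleton]
      rintro z hz y (hy | rfl)
      exacts [horder 2 4 (by simp) (by simp) (by simp) _ hz _ hy,
        horder 2 3 (by simp) (by simp) (by simp) _ hz _ (mem_singleton_self _)]
    have h₅ : ∀ z ∈ W₅, m₄ < z := fun z hz =>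
      horder 4 3 (by simp) (by simp) (by simp) _ hz _ (mem_singleton_self _)
    obtain ⟨hV₁, hi₁⟩ := hiso 0 (by simp)
    obtain ⟨hV₃, hi₃⟩ := hiso 2 (by simp)
    obtain ⟨hV₅, hi₅⟩ := hiso 4 (by simp)
    exact ⟨V₁, V₃, V₅, ⟨hV₁, hrec 0 (by simp)⟩, ⟨hV₃, hrec 2 (by simp)⟩,
      ⟨hV₅, hrec 4 (by simp)⟩, eq_inflate_of_lt hw h₂ h₁ h₃ h₅ hV₁ hV₃ hV₅ hi₁ hi₃ hi₅⟩

theorem getElem?_inflate_length (u v x : List ℕ) :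
    (inflate u v x)[u.length]? = some (u.length + v.length + x.length + 2) := by
  simp [inflate]

theorem getElem?_inflate_length_add (u v x : List ℕ) :
    (inflate u v x)[u.length + v.length + 1]? = some 1 := by
  simp only [inflate, flatten_cons, flatten_nil, append_nil, singleton_append]
  rw [getElem?_append_right (by simp; omega)]
  simp [show u.length + v.length + 1 - u.length = v.length + 1 by omega]

theorem inflate_inj {u v x u' v' x' : List ℕ} (hu : IsPermWord u) (hv : IsPermWord v)
    (hx : IsPermWord x) (h : inflate u v x = inflate u' v' x') : u = u' ∧ v = v' ∧ x = x' := by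
  have hn := congrArg length h
  simp only [length_inflate] at hn
  have hnd : (inflate u v x).Nodup := (isPermWord_inflate hu hv hx).nodup_iff.2 nodup_range'
  have hlu : u.length = u'.length := by
    refine (getElem?_inj (by rw [length_inflate]; omega) hnd).1 ?_
    rw [getElem?_inflate_length, h, getElem?_inflate_length, hn]
  have hlv : v.length = v'.length := by
    have : u.length + v.length + 1 = u'.length + v'.length + 1 := by
      refine (getElem?_inj (by rw [length_inflate]; omega) hnd).1 ?_
      rw [getElem?_inflate_length_add, h, getElem?_inflate_length_add]
    omega
  have hlx : x.length = x'.length := by omega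
  simp only [inflate, flatten_cons, flatten_nil, append_nil, singleton_append, hlu, hlv, hlx] at h
  obtain ⟨h₁, h'⟩ := append_inj h (by simp [hlu])
  obtain ⟨h₃, h₅⟩ := append_inj (cons.inj h').2 (by simp [hlv])
  exact ⟨map_injective_iff.2 (add_left_injective _) h₁,
    map_injective_iff.2 (add_left_injective _) h₃,
    map_injective_iff.2 (add_left_injective _) (cons.inj h₅).2⟩

theorem inflate_mem_Rset {u v x : List ℕ} (hu : IsPermWord u ∧ InR P B u)
    (hv : IsPermWord v ∧ InR P B v) (hx : IsPermWord x ∧ InR P B x) :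
    inflate u v x ∈ Rset P B (u.length + v.length + x.length + 2) :=
  ⟨length_inflate u v x, isPermWord_inflate hu.1 hv.1 hx.1,
    inR_inflate hu.1 hv.1 hx.1 hu.2 hv.2 hx.2⟩

noncomputable def inflations (a b c : ℕ) : Finset (List ℕ) :=
  ((finite_Rset P B a).toFinset ×ˢ (finite_Rset P B b).toFinset ×ˢ
    (finite_Rset P B c).toFinset).image fun q => inflate q.1 q.2.1 q.2.2

theorem mem_inflations {a b c : ℕ} {w : List ℕ} :
    w ∈ inflations a b c ↔
      ∃ u ∈ Rset P B a, ∃ v ∈ Rset P B b, ∃ x ∈ Rset P B c, inflate u v x = w := by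
  simp [inflations, and_assoc]

theorem card_inflations (a b c : ℕ) :
    (inflations a b c).card =
      Nat.card (Rset P B a) * Nat.card (Rset P B b) * Nat.card (Rset P B c) := by
  rw [inflations, Finset.card_image_of_injOn, Finset.card_product, Finset.card_product,
    Nat.card_eq_card_finite_toFinset, Nat.card_eq_card_finite_toFinset,
    Nat.card_eq_card_finite_toFinset, Nat.mul_assoc]
  rintro ⟨u, v, x⟩ hq ⟨u', v', x'⟩ - h
  simp only [Finset.coe_product, Set.mem_prod, Set.Finite.coe_toFinset] at hq
  obtain ⟨rfl, rfl, rfl⟩ := inflate_inj hq.1.2.1 hq.2.1.2.1 hq.2.2.2.1 h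
  rfl

theorem toFinset_Rset_eq_biUnion {n : ℕ} (hn : 2 ≤ n) :
    (finite_Rset P B n).toFinset =
      ((Finset.Icc 1 (n - 1)).sigma fun i => Finset.Icc (i + 1) n).biUnion
        fun p => inflations (p.1 - 1) (p.2 - p.1 - 1) (n - p.2) := by
  ext w
  simp only [Set.Finite.mem_toFinset, Finset.mem_biUnion, Finset.mem_sigma, Finset.mem_Icc,
    mem_inflations, Sigma.exists]
  constructor
  · rintro ⟨hlen, hw, hR⟩
    obtain ⟨u, v, x, hu, hv, hx, rfl⟩ := exists_eq_inflate hw hR (by omega)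
    rw [length_inflate] at hlen
    refine ⟨u.length + 1, u.length + v.length + 2, ⟨⟨by omega, by omega⟩, by omega, by omega⟩,
      u, ⟨by omega, hu⟩, v, ⟨by omega, hv⟩, x, ⟨by omega, hx⟩, rfl⟩
  · rintro ⟨i, j, ⟨hi, hj⟩, u, ⟨hlu, hu⟩, v, ⟨hlv, hv⟩, x, ⟨hlx, hx⟩, rfl⟩
    have := inflate_mem_Rset hu hv hx
    rwa [hlu, hlv, hlx, show i - 1 + (j - i - 1) + (n - j) + 2 = n by omega] at this

theorem card_Rset_eq_sum {n : ℕ} (hn : 2 ≤ n) :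
    Nat.card (Rset P B n) = ∑ i ∈ Finset.Icc 1 (n - 1), ∑ j ∈ Finset.Icc (i + 1) n,
      Nat.card (Rset P B (i - 1)) * Nat.card (Rset P B (j - i - 1)) *
        Nat.card (Rset P B (n - j)) := by
  rw [Nat.card_eq_card_finite_toFinset (finite_Rset P B n), toFinset_Rset_eq_biUnion hn,
    Finset.card_biUnion, Finset.sum_sigma]
  · simp only [card_inflations]
  · rintro ⟨i, j⟩ hij ⟨i', j'⟩ hij' hne
    simp only [Finset.coe_sigma, Set.mem_sigma_iff, Finset.coe_Icc, Set.mem_Icc] at hij hij'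
    refine Finset.disjoint_left.2 fun w hw hw' => hne ?_
    dsimp only at hw hw'
    obtain ⟨u, ⟨hlu, hu, -⟩, v, ⟨hlv, hv, -⟩, x, ⟨-, hx, -⟩, rfl⟩ := mem_inflations.1 hw
    obtain ⟨u', ⟨hlu', -⟩, v', ⟨hlv', -⟩, x', -, h⟩ := mem_inflations.1 hw'
    obtain ⟨rfl, rfl, -⟩ := inflate_inj hu hv hx h.symm
    simp only [Sigma.mk.injEq, heq_eq_eq]
    omega

end Template45312

/-- Let `T` be the template `(45312, 10101)` and let `r 0 = r 1 = 1` and,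
for `n > 1`, `r n = ∑_{i=1}^{n-1} ∑_{j=i+1}^{n} r (i-1) * r (j-i-1) * r (n-j)`.  Then
`|R_{n,T}| = r n` for all `n ≥ 0`. -/
theorem template_45312_card (r : ℕ → ℕ)
    (h0 : r 0 = 1) (h1 : r 1 = 1)
    (hrec : ∀ n, 1 < n → r n = ∑ i ∈ Finset.Icc 1 (n - 1), ∑ j ∈ Finset.Icc (i + 1) n,
      r (i - 1) * r (j - i - 1) * r (n - j))
    (n : ℕ) :
    Nat.card (Rset [4, 5, 3, 1, 2] [true, false, true, false, true] n) = r n := by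
  induction n using Nat.strong_induction_on with
  | _ n ih =>
    match n with
    | 0 => rw [Rset_zero, Nat.card_unique, h0]
    | 1 => rw [Rset_one, Nat.card_unique, h1]
    | n + 2 =>
      rw [Template45312.card_Rset_eq_sum (by omega), hrec _ (by omega)]
      refine Finset.sum_congr rfl fun i hi => Finset.sum_congr rfl fun j hj => ?_
      simp only [Finset.mem_Icc] at hi hj
      rw [ih _ (by omega), ih _ (by omega), ih _ (by omega)]
end

section
/- Let Q_n be the set of all permutations of length n which avoid every element of {2341, 2413, 2431, 3241}, and let q_n = |Q_n|. Define the sequence (s_n) by s_0 = s_1 = 1 and, for n > 1, s_n = Σ_{i=1}^{n-1} Σ_{j=i+1}^{n} 2·s_{i-1}·s_{j-i-1}·s_{n-j}. Then q_n ≥ s_n for all n ≥ 0. -/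
/- ----------------------------------------------------------------
   Auxiliary development
---------------------------------------------------------------- -/

lemma exists_four (s : List ℕ) (h : s.length = 4) : ∃ a b c d, s = [a,b,c,d] := by
  rcases s with _|⟨a,_|⟨b,_|⟨c,_|⟨d,_|⟨e,t⟩⟩⟩⟩⟩ <;> simp_all

lemma contains_2341 (w : List ℕ) : ContainsPattern w [2,3,4,1] ↔
    ∃ x1 x2 x3 x4, [x1,x2,x3,x4].Sublist w ∧ x4 < x1 ∧ x1 < x2 ∧ x2 < x3 := by
  constructor
  · rintro ⟨s, hsub, hlen, hcmp⟩
    simp only [List.length_cons, List.length_nil] at hlen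
    obtain ⟨a,b,c,d,rfl⟩ := exists_four s hlen
    have h30 := hcmp 3 0 (by simp) (by simp) (by simp) (by simp)
    have h01 := hcmp 0 1 (by simp) (by simp) (by simp) (by simp)
    have h12 := hcmp 1 2 (by simp) (by simp) (by simp) (by simp)
    simp at h30 h01 h12
    exact ⟨a,b,c,d, hsub, h30, h01, h12⟩
  · rintro ⟨x1,x2,x3,x4, hsub, r1, r2, r3⟩
    refine ⟨[x1,x2,x3,x4], hsub, by simp, ?_⟩
    intro i j hi hj hi' hj'
    simp only [List.length_cons, List.length_nil] at hi hj
    interval_cases i <;> interval_cases j <;> simp <;> omega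

lemma contains_2413 (w : List ℕ) : ContainsPattern w [2,4,1,3] ↔
    ∃ x1 x2 x3 x4, [x1,x2,x3,x4].Sublist w ∧ x3 < x1 ∧ x1 < x4 ∧ x4 < x2 := by
  constructor
  · rintro ⟨s, hsub, hlen, hcmp⟩
    simp only [List.length_cons, List.length_nil] at hlen
    obtain ⟨a,b,c,d,rfl⟩ := exists_four s hlen
    have h20 := hcmp 2 0 (by simp) (by simp) (by simp) (by simp)
    have h03 := hcmp 0 3 (by simp) (by simp) (by simp) (by simp)
    have h31 := hcmp 3 1 (by simp) (by simp) (by simp) (by simp)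
    simp at h20 h03 h31
    exact ⟨a,b,c,d, hsub, h20, h03, h31⟩
  · rintro ⟨x1,x2,x3,x4, hsub, r1, r2, r3⟩
    refine ⟨[x1,x2,x3,x4], hsub, by simp, ?_⟩
    intro i j hi hj hi' hj'
    simp only [List.length_cons, List.length_nil] at hi hj
    interval_cases i <;> interval_cases j <;> simp <;> omega

lemma contains_2431 (w : List ℕ) : ContainsPattern w [2,4,3,1] ↔
    ∃ x1 x2 x3 x4, [x1,x2,x3,x4].Sublist w ∧ x4 < x1 ∧ x1 < x3 ∧ x3 < x2 := by
  constructor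
  · rintro ⟨s, hsub, hlen, hcmp⟩
    simp only [List.length_cons, List.length_nil] at hlen
    obtain ⟨a,b,c,d,rfl⟩ := exists_four s hlen
    have h30 := hcmp 3 0 (by simp) (by simp) (by simp) (by simp)
    have h02 := hcmp 0 2 (by simp) (by simp) (by simp) (by simp)
    have h21 := hcmp 2 1 (by simp) (by simp) (by simp) (by simp)
    simp at h30 h02 h21
    exact ⟨a,b,c,d, hsub, h30, h02, h21⟩
  · rintro ⟨x1,x2,x3,x4, hsub, r1, r2, r3⟩
    refine ⟨[x1,x2,x3,x4], hsub, by simp, ?_⟩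
    intro i j hi hj hi' hj'
    simp only [List.length_cons, List.length_nil] at hi hj
    interval_cases i <;> interval_cases j <;> simp <;> omega

lemma contains_3241 (w : List ℕ) : ContainsPattern w [3,2,4,1] ↔
    ∃ x1 x2 x3 x4, [x1,x2,x3,x4].Sublist w ∧ x4 < x2 ∧ x2 < x1 ∧ x1 < x3 := by
  constructor
  · rintro ⟨s, hsub, hlen, hcmp⟩
    simp only [List.length_cons, List.length_nil] at hlen
    obtain ⟨a,b,c,d,rfl⟩ := exists_four s hlen
    have h31 := hcmp 3 1 (by simp) (by simp) (by simp) (by simp)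
    have h10 := hcmp 1 0 (by simp) (by simp) (by simp) (by simp)
    have h02 := hcmp 0 2 (by simp) (by simp) (by simp) (by simp)
    simp at h31 h10 h02
    exact ⟨a,b,c,d, hsub, h31, h10, h02⟩
  · rintro ⟨x1,x2,x3,x4, hsub, r1, r2, r3⟩
    refine ⟨[x1,x2,x3,x4], hsub, by simp, ?_⟩
    intro i j hi hj hi' hj'
    simp only [List.length_cons, List.length_nil] at hi hj
    interval_cases i <;> interval_cases j <;> simp <;> omega

/-- `w` has no occurrence of any of the four patterns, phrased via quadruples. -/
def Good (w : List ℕ) : Prop := ∀ x1 x2 x3 x4 : ℕ, [x1,x2,x3,x4].Sublist w →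
  ¬(x4 < x1 ∧ x1 < x2 ∧ x2 < x3) ∧ ¬(x3 < x1 ∧ x1 < x4 ∧ x4 < x2) ∧
  ¬(x4 < x1 ∧ x1 < x3 ∧ x3 < x2) ∧ ¬(x4 < x2 ∧ x2 < x1 ∧ x1 < x3)

lemma good_iff_avoids (w : List ℕ) : Good w ↔
    (AvoidsPattern w [2,3,4,1] ∧ AvoidsPattern w [2,4,1,3] ∧
     AvoidsPattern w [2,4,3,1] ∧ AvoidsPattern w [3,2,4,1]) := by
  constructor
  · intro hg
    refine ⟨?_, ?_, ?_, ?_⟩ <;> intro hC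
    · rw [contains_2341] at hC
      obtain ⟨x1,x2,x3,x4,hsub,r1,r2,r3⟩ := hC
      exact (hg x1 x2 x3 x4 hsub).1 ⟨r1,r2,r3⟩
    · rw [contains_2413] at hC
      obtain ⟨x1,x2,x3,x4,hsub,r1,r2,r3⟩ := hC
      exact (hg x1 x2 x3 x4 hsub).2.1 ⟨r1,r2,r3⟩
    · rw [contains_2431] at hC
      obtain ⟨x1,x2,x3,x4,hsub,r1,r2,r3⟩ := hC
      exact (hg x1 x2 x3 x4 hsub).2.2.1 ⟨r1,r2,r3⟩
    · rw [contains_3241] at hC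
      obtain ⟨x1,x2,x3,x4,hsub,r1,r2,r3⟩ := hC
      exact (hg x1 x2 x3 x4 hsub).2.2.2 ⟨r1,r2,r3⟩
  · rintro ⟨a1,a2,a3,a4⟩ x1 x2 x3 x4 hsub
    refine ⟨?_, ?_, ?_, ?_⟩ <;> rintro ⟨r1,r2,r3⟩
    · exact a1 ((contains_2341 w).2 ⟨x1,x2,x3,x4,hsub,r1,r2,r3⟩)
    · exact a2 ((contains_2413 w).2 ⟨x1,x2,x3,x4,hsub,r1,r2,r3⟩)
    · exact a3 ((contains_2431 w).2 ⟨x1,x2,x3,x4,hsub,r1,r2,r3⟩)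
    · exact a4 ((contains_3241 w).2 ⟨x1,x2,x3,x4,hsub,r1,r2,r3⟩)

lemma append_eq_four {s1 s2 : List ℕ} {x1 x2 x3 x4 : ℕ} (h : s1 ++ s2 = [x1,x2,x3,x4]) :
    (s1 = [] ∧ s2 = [x1,x2,x3,x4]) ∨ (s1 = [x1] ∧ s2 = [x2,x3,x4]) ∨
    (s1 = [x1,x2] ∧ s2 = [x3,x4]) ∨ (s1 = [x1,x2,x3] ∧ s2 = [x4]) ∨
    (s1 = [x1,x2,x3,x4] ∧ s2 = []) := by
  rcases s1 with _|⟨a,_|⟨b,_|⟨c,_|⟨d,_|⟨e,t⟩⟩⟩⟩⟩ <;> simp_all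

lemma append_eq_three {s1 s2 : List ℕ} {x1 x2 x3 : ℕ} (h : s1 ++ s2 = [x1,x2,x3]) :
    (s1 = [] ∧ s2 = [x1,x2,x3]) ∨ (s1 = [x1] ∧ s2 = [x2,x3]) ∨
    (s1 = [x1,x2] ∧ s2 = [x3]) ∨ (s1 = [x1,x2,x3] ∧ s2 = []) := by
  rcases s1 with _|⟨a,_|⟨b,_|⟨c,_|⟨d,t⟩⟩⟩⟩ <;> simp_all

lemma good_append {u v : List ℕ} (hlt : ∀ x ∈ u, ∀ y ∈ v, x < y)
    (hu : Good u) (hv : Good v) : Good (u ++ v) := by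
  intro x1 x2 x3 x4 hs
  rw [List.sublist_append_iff] at hs
  obtain ⟨s1, s2, heq, h1, h2⟩ := hs
  rcases append_eq_four heq.symm with ⟨e1,e2⟩|⟨e1,e2⟩|⟨e1,e2⟩|⟨e1,e2⟩|⟨e1,e2⟩ <;>
    subst e1 <;> subst e2
  · exact hv x1 x2 x3 x4 h2
  · have m1 := h1.subset (by simp : x1 ∈ [x1])
    have m2 := h2.subset (show x2 ∈ [x2,x3,x4] by simp)
    have m3 := h2.subset (show x3 ∈ [x2,x3,x4] by simp)
    have m4 := h2.subset (show x4 ∈ [x2,x3,x4] by simp)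
    have i2 := hlt x1 m1 x2 m2; have i3 := hlt x1 m1 x3 m3; have i4 := hlt x1 m1 x4 m4
    refine ⟨?_,?_,?_,?_⟩ <;> rintro ⟨_,_,_⟩ <;> omega
  · have m1 := h1.subset (show x1 ∈ [x1,x2] by simp)
    have m2 := h1.subset (show x2 ∈ [x1,x2] by simp)
    have m3 := h2.subset (show x3 ∈ [x3,x4] by simp)
    have m4 := h2.subset (show x4 ∈ [x3,x4] by simp)
    have i13 := hlt x1 m1 x3 m3; have i14 := hlt x1 m1 x4 m4
    have i23 := hlt x2 m2 x3 m3; have i24 := hlt x2 m2 x4 m4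
    refine ⟨?_,?_,?_,?_⟩ <;> rintro ⟨_,_,_⟩ <;> omega
  · have m1 := h1.subset (show x1 ∈ [x1,x2,x3] by simp)
    have m2 := h1.subset (show x2 ∈ [x1,x2,x3] by simp)
    have m3 := h1.subset (show x3 ∈ [x1,x2,x3] by simp)
    have m4 := h2.subset (show x4 ∈ [x4] by simp)
    have i1 := hlt x1 m1 x4 m4; have i2 := hlt x2 m2 x4 m4; have i3 := hlt x3 m3 x4 m4
    refine ⟨?_,?_,?_,?_⟩ <;> rintro ⟨_,_,_⟩ <;> omega
  · exact hu x1 x2 x3 x4 h1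

lemma good_cons_max {t : List ℕ} {M : ℕ} (hM : ∀ x ∈ t, x < M) (ht : Good t) :
    Good (M :: t) := by
  intro x1 x2 x3 x4 hs
  rw [List.sublist_cons_iff] at hs
  rcases hs with hs | ⟨r, hr, hrs⟩
  · exact ht x1 x2 x3 x4 hs
  · obtain ⟨rfl, hx⟩ : x1 = M ∧ r = [x2,x3,x4] := by
      constructor <;> injection hr with h1 h2 <;> simp_all
    subst hx
    have m2 := hM x2 (hrs.subset (by simp))
    have m3 := hM x3 (hrs.subset (by simp))
    have m4 := hM x4 (hrs.subset (by simp))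
    refine ⟨?_,?_,?_,?_⟩ <;> rintro ⟨_,_,_⟩ <;> omega

lemma good_nil : Good [] := by intro x1 x2 x3 x4 hs; simp at hs

lemma good_single (a : ℕ) : Good [a] := by
  intro x1 x2 x3 x4 hs
  have := hs.length_le; simp at this

lemma good_v1 {B C : List ℕ} {v M : ℕ} (hBv : ∀ x ∈ B, x < v) (hCv : ∀ x ∈ C, x < v)
    (hBC : ∀ x ∈ B, ∀ y ∈ C, x < y) (hvM : v < M) (hB : Good B) (hC : Good C) :
    Good (v :: (B ++ M :: C)) := by
  have hCM : ∀ x ∈ C, x < M := fun x hx => lt_trans (hCv x hx) hvM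
  have hBMC : ∀ x ∈ B, ∀ y ∈ M :: C, x < y := by
    intro x hx y hy
    rcases List.mem_cons.1 hy with rfl | hy
    · exact lt_trans (hBv x hx) hvM
    · exact hBC x hx y hy
  have htail : Good (B ++ M :: C) := good_append hBMC hB (good_cons_max hCM hC)
  intro x1 x2 x3 x4 hs
  rw [List.sublist_cons_iff] at hs
  rcases hs with hs | ⟨r, hr, hrs⟩
  · exact htail x1 x2 x3 x4 hs
  · obtain ⟨rfl, hx⟩ : x1 = v ∧ r = [x2,x3,x4] := by
      constructor <;> injection hr with h1 h2 <;> simp_all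
    subst hx
    rw [List.sublist_append_iff] at hrs
    obtain ⟨r1, r2, heq, h1, h2⟩ := hrs
    rw [List.sublist_cons_iff] at h2
    rcases append_eq_three heq.symm with ⟨e1,e2⟩|⟨e1,e2⟩|⟨e1,e2⟩|⟨e1,e2⟩ <;>
      subst e1 <;> subst e2
    · rcases h2 with h2 | ⟨r3, hr3, hrr⟩
      · have m2 := hCv x2 (h2.subset (by simp))
        have m3 := hCv x3 (h2.subset (by simp))
        have m4 := hCv x4 (h2.subset (by simp))
        refine ⟨?_,?_,?_,?_⟩ <;> rintro ⟨_,_,_⟩ <;> omega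
      · obtain ⟨rfl, hx⟩ : x2 = M ∧ r3 = [x3,x4] := by
          constructor <;> injection hr3 with h1 h2 <;> simp_all
        subst hx
        have m3 := hCv x3 (hrr.subset (by simp))
        have m4 := hCv x4 (hrr.subset (by simp))
        refine ⟨?_,?_,?_,?_⟩ <;> rintro ⟨_,_,_⟩ <;> omega
    · have m2 := hBv x2 (h1.subset (by simp))
      rcases h2 with h2 | ⟨r3, hr3, hrr⟩
      · have m3 := hCv x3 (h2.subset (by simp))
        have m4 := hCv x4 (h2.subset (by simp))
        have i23 := hBC x2 (h1.subset (by simp)) x3 (h2.subset (by simp))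
        have i24 := hBC x2 (h1.subset (by simp)) x4 (h2.subset (by simp))
        refine ⟨?_,?_,?_,?_⟩ <;> rintro ⟨_,_,_⟩ <;> omega
      · obtain ⟨rfl, hx⟩ : x3 = M ∧ r3 = [x4] := by
          constructor <;> injection hr3 with h1 h2 <;> simp_all
        subst hx
        have m4 := hCv x4 (hrr.subset (by simp))
        have i24 := hBC x2 (h1.subset (by simp)) x4 (hrr.subset (by simp))
        refine ⟨?_,?_,?_,?_⟩ <;> rintro ⟨_,_,_⟩ <;> omega
    · have m2 := hBv x2 (h1.subset (by simp))
      have m3 := hBv x3 (h1.subset (by simp))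
      rcases h2 with h2 | ⟨r3, hr3, hrr⟩
      · have m4 := hCv x4 (h2.subset (by simp))
        have i24 := hBC x2 (h1.subset (by simp)) x4 (h2.subset (by simp))
        have i34 := hBC x3 (h1.subset (by simp)) x4 (h2.subset (by simp))
        refine ⟨?_,?_,?_,?_⟩ <;> rintro ⟨_,_,_⟩ <;> omega
      · obtain ⟨rfl, hx⟩ : x4 = M ∧ r3 = [] := by
          constructor <;> injection hr3 with h1 h2 <;> simp_all
        refine ⟨?_,?_,?_,?_⟩ <;> rintro ⟨_,_,_⟩ <;> omega
    · have m2 := hBv x2 (h1.subset (by simp))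
      have m3 := hBv x3 (h1.subset (by simp))
      have m4 := hBv x4 (h1.subset (by simp))
      refine ⟨?_,?_,?_,?_⟩ <;> rintro ⟨_,_,_⟩ <;> omega

/- ------------------ the construction Φ ------------------ -/

def shiftW (k : ℕ) (l : List ℕ) : List ℕ := l.map (k + ·)

lemma shiftW_length (k : ℕ) (l : List ℕ) : (shiftW k l).length = l.length := by
  simp [shiftW]

lemma mem_permWord {α : List ℕ} (h : IsPermWord α) {x : ℕ} (hx : x ∈ α) :
    1 ≤ x ∧ x ≤ α.length := by
  have := h.mem_iff.1 hx
  rw [List.mem_range'_1] at this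
  omega

lemma mem_shiftW {k : ℕ} {β : List ℕ} (h : IsPermWord β) {x : ℕ} (hx : x ∈ shiftW k β) :
    k + 1 ≤ x ∧ x ≤ k + β.length := by
  simp only [shiftW, List.mem_map] at hx
  obtain ⟨y, hy, rfl⟩ := hx
  have := mem_permWord h hy
  omega

lemma shiftW_perm {k : ℕ} {β : List ℕ} (h : IsPermWord β) :
    (shiftW k β).Perm (List.range' (k+1) β.length) := by
  have := h.map (k + ·)
  rwa [List.map_add_range'] at this

def Phi (bb : Bool) (α β γ : List ℕ) : List ℕ :=
  if bb then
    α ++ (α.length+β.length+γ.length+1) ::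
      (shiftW α.length β ++ (α.length+β.length+γ.length+2) :: shiftW (α.length+β.length) γ)
  else
    α ++ (α.length+β.length+γ.length+2) ::
      (shiftW α.length β ++ (α.length+β.length+γ.length+1) :: shiftW (α.length+β.length) γ)

lemma Phi_length (bb : Bool) (α β γ : List ℕ) :
    (Phi bb α β γ).length = α.length+β.length+γ.length+2 := by
  cases bb <;> simp [Phi, shiftW] <;> omega

lemma Phi_perm (bb : Bool) {α β γ : List ℕ} (hα : IsPermWord α) (hβ : IsPermWord β)
    (hγ : IsPermWord γ) : IsPermWord (Phi bb α β γ) := by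
  set a := α.length
  set b := β.length
  set c := γ.length
  have e1 : List.range' 1 a ++ List.range' (a+1) b = List.range' 1 (a+b) := by
    have h := List.range'_append (s := 1) (m := a) (n := b) (step := 1)
    simp only [one_mul] at h
    rw [show (1:ℕ) + a = a + 1 from by omega] at h
    rw [h]
  have e2 : List.range' 1 (a+b) ++ List.range' (a+b+1) c = List.range' 1 (a+b+c) := by
    have h := List.range'_append (s := 1) (m := a+b) (n := c) (step := 1)
    simp only [one_mul] at h
    rw [show (1:ℕ) + (a+b) = a+b+1 from by omega] at h
    rw [h]
  have habc : List.range' 1 (a+b+c) = List.range' 1 a ++ List.range' (a+1) b ++ List.range' (a+b+1) c := by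
    rw [e1, e2]
  have hbase : (α ++ (shiftW a β ++ shiftW (a+b) γ)).Perm (List.range' 1 (a+b+c)) := by
    rw [habc, List.append_assoc]
    exact hα.append ((shiftW_perm hβ).append (shiftW_perm hγ))
  have hrange2 : List.range' 1 (a+b+c+2) =
      List.range' 1 (a+b+c) ++ [a+b+c+1, a+b+c+2] := by
    have h := List.range'_append (s := 1) (m := a+b+c) (n := 2) (step := 1)
    simp only [one_mul] at h
    rw [show (1:ℕ) + (a+b+c) = a+b+c+1 from by omega] at h
    rw [← h]
    congr 1
  have key : ∀ p q : ℕ,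
      (α ++ p :: (shiftW a β ++ q :: shiftW (a+b) γ)).Perm
        (p :: q :: (α ++ (shiftW a β ++ shiftW (a+b) γ))) := by
    intro p q
    refine List.Perm.trans List.perm_middle (List.Perm.cons p ?_)
    have step1 : α ++ (shiftW a β ++ q :: shiftW (a+b) γ)
        = (α ++ shiftW a β) ++ q :: shiftW (a+b) γ := by rw [List.append_assoc]
    rw [step1]
    refine List.Perm.trans List.perm_middle ?_
    rw [List.append_assoc]
  have hr : (List.range' 1 (a+b+c+2)).Perm
      ((a+b+c+1) :: (a+b+c+2) :: (List.range' 1 (a+b+c))) := by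
    rw [hrange2]
    refine List.Perm.trans List.perm_middle (List.Perm.cons _ ?_)
    simpa using (List.perm_middle (a := a+b+c+2) (l₁ := List.range' 1 (a+b+c)) (l₂ := []))
  unfold IsPermWord
  rw [Phi_length]
  cases bb
  · show (α ++ (a+b+c+2) :: (shiftW a β ++ (a+b+c+1) :: shiftW (a+b) γ)).Perm _
    refine ((key _ _).trans ?_)
    refine (List.Perm.swap _ _ _).trans ?_
    exact (((hbase.cons _).cons _).trans hr.symm)
  · show (α ++ (a+b+c+1) :: (shiftW a β ++ (a+b+c+2) :: shiftW (a+b) γ)).Perm _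
    refine ((key _ _).trans ?_)
    exact (((hbase.cons _).cons _).trans hr.symm)

lemma good_shiftW {k : ℕ} {β : List ℕ} (h : Good β) : Good (shiftW k β) := by
  intro x1 x2 x3 x4 hs
  rw [shiftW, List.sublist_map_iff] at hs
  obtain ⟨l', hl', heq⟩ := hs
  have hlen : l'.length = 4 := by
    have := congrArg List.length heq; simpa using this.symm
  obtain ⟨y1,y2,y3,y4,rfl⟩ := exists_four l' hlen
  simp only [List.map_cons, List.map_nil, List.cons.injEq, and_true] at heq
  obtain ⟨rfl, rfl, rfl, rfl⟩ := heq
  have := h y1 y2 y3 y4 hl'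
  refine ⟨?_,?_,?_,?_⟩ <;> rintro ⟨h1,h2,h3⟩ <;>
    [exact this.1 ⟨by omega, by omega, by omega⟩;
     exact this.2.1 ⟨by omega, by omega, by omega⟩;
     exact this.2.2.1 ⟨by omega, by omega, by omega⟩;
     exact this.2.2.2 ⟨by omega, by omega, by omega⟩]

lemma Phi_good (bb : Bool) {α β γ : List ℕ} (hα : IsPermWord α) (hβ : IsPermWord β)
    (hγ : IsPermWord γ) (gα : Good α) (gβ : Good β) (gγ : Good γ) :
    Good (Phi bb α β γ) := by
  set a := α.length
  set b := β.length
  set c := γ.length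
  have Bα : ∀ x ∈ α, x ≤ a := fun x hx => (mem_permWord hα hx).2
  have Bβ : ∀ x ∈ shiftW a β, a+1 ≤ x ∧ x ≤ a+b := fun x hx => mem_shiftW hβ hx
  have Bγ : ∀ x ∈ shiftW (a+b) γ, a+b+1 ≤ x ∧ x ≤ a+b+c := fun x hx => by
    have := mem_shiftW hγ hx; omega
  cases bb
  · show Good (α ++ (a+b+c+2) :: (shiftW a β ++ (a+b+c+1) :: shiftW (a+b) γ))
    refine good_append ?_ gα ?_
    · intro x hx y hy
      have hxa := Bα x hx
      rcases List.mem_cons.1 hy with rfl | hy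
      · omega
      · rcases List.mem_append.1 hy with hy | hy
        · have := Bβ y hy; omega
        · rcases List.mem_cons.1 hy with rfl | hy
          · omega
          · have := Bγ y hy; omega
    · refine good_cons_max ?_ ?_
      · intro x hx
        rcases List.mem_append.1 hx with hx | hx
        · have := Bβ x hx; omega
        · rcases List.mem_cons.1 hx with rfl | hx
          · omega
          · have := Bγ x hx; omega
      · refine good_append ?_ (good_shiftW gβ) (good_cons_max ?_ (good_shiftW gγ))
        · intro x hx y hy
          have := Bβ x hx
          rcases List.mem_cons.1 hy with rfl | hy
          · omega
          · have := Bγ y hy; omega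
        · intro x hx; have := Bγ x hx; omega
  · show Good (α ++ (a+b+c+1) :: (shiftW a β ++ (a+b+c+2) :: shiftW (a+b) γ))
    refine good_append ?_ gα ?_
    · intro x hx y hy
      have hxa := Bα x hx
      rcases List.mem_cons.1 hy with rfl | hy
      · omega
      · rcases List.mem_append.1 hy with hy | hy
        · have := Bβ y hy; omega
        · rcases List.mem_cons.1 hy with rfl | hy
          · omega
          · have := Bγ y hy; omega
    · refine good_v1 ?_ ?_ ?_ (by omega) (good_shiftW gβ) (good_shiftW gγ)
      · intro x hx; have := Bβ x hx; omega
      · intro x hx; have := Bγ x hx; omega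
      · intro x hx y hy
        have := Bβ x hx; have := Bγ y hy; omega

/- ------------------ injectivity ------------------ -/

lemma append_cons_inj {x : ℕ} {u u' v v' : List ℕ} (h1 : x ∉ u) (h2 : x ∉ u')
    (h : u ++ x :: v = u' ++ x :: v') : u = u' ∧ v = v' := by
  induction u generalizing u' with
  | nil =>
    cases u' with
    | nil => simpa using h
    | cons a t =>
      simp only [List.nil_append, List.cons_append, List.cons.injEq] at h
      exact absurd (h.1 ▸ List.mem_cons_self (a := a) (l := t)) h2
  | cons a t ih =>
    cases u' with
    | nil =>
      simp only [List.nil_append, List.cons_append, List.cons.injEq] at h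
      exact absurd (h.1.symm ▸ List.mem_cons_self (a := a) (l := t)) h1
    | cons a' t' =>
      simp only [List.cons_append, List.cons.injEq] at h
      obtain ⟨rfl, h⟩ := h
      have := ih (fun hm => h1 (List.mem_cons_of_mem _ hm))
        (fun hm => h2 (List.mem_cons_of_mem _ hm)) h
      exact ⟨by rw [this.1], this.2⟩

lemma shiftW_inj {k : ℕ} {β β' : List ℕ} (h : shiftW k β = shiftW k β') : β = β' := by
  have : Function.Injective (k + ·) := fun x y hxy => by
    simp only at hxy; omega
  exact List.map_injective_iff.2 this h

lemma Phi_inj {b b' : Bool} {α β γ α' β' γ' : List ℕ}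
    (hα : IsPermWord α) (hβ : IsPermWord β) (hγ : IsPermWord γ)
    (hα' : IsPermWord α') (hβ' : IsPermWord β') (hγ' : IsPermWord γ')
    (h : Phi b α β γ = Phi b' α' β' γ') :
    b = b' ∧ α = α' ∧ β = β' ∧ γ = γ' := by
  have hlen : α.length+β.length+γ.length = α'.length+β'.length+γ'.length := by
    have := congrArg List.length h
    rw [Phi_length, Phi_length] at this; omega
  set a := α.length with ha
  set T := α.length+β.length+γ.length with hT
  have hNα : (T+2) ∉ α := fun hm => by have := mem_permWord hα hm; omega
  have hN1α : (T+1) ∉ α := fun hm => by have := mem_permWord hα hm; omega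
  have hNα' : (T+2) ∉ α' := fun hm => by have := mem_permWord hα' hm; omega
  have hN1α' : (T+1) ∉ α' := fun hm => by have := mem_permWord hα' hm; omega
  have hNβ : (T+2) ∉ shiftW α.length β := fun hm => by have := mem_shiftW hβ hm; omega
  have hN1β : (T+1) ∉ shiftW α.length β := fun hm => by have := mem_shiftW hβ hm; omega
  have hNβ' : (T+2) ∉ shiftW α'.length β' := fun hm => by have := mem_shiftW hβ' hm; omega
  have hN1β' : (T+1) ∉ shiftW α'.length β' := fun hm => by have := mem_shiftW hβ' hm; omega
  cases b <;> cases b' <;>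
    simp only [Phi, Bool.false_eq_true, if_false, eq_self_iff_true, if_true, ← hT, ← hlen] at h
  · -- false false : pivots (T+2) then (T+1)
    obtain ⟨hαeq, h2⟩ := append_cons_inj hNα hNα' h
    have haa : α.length = α'.length := by rw [hαeq]
    rw [← haa] at h2
    obtain ⟨hβeq, hγeq⟩ := append_cons_inj hN1β (by rw [haa]; exact hN1β') h2
    have hbb : β.length = β'.length := by
      have := congrArg List.length hβeq; simpa [shiftW] using this
    refine ⟨rfl, hαeq, shiftW_inj hβeq, ?_⟩
    rw [← hbb] at hγeq
    exact shiftW_inj hγeq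
  · -- false true : contradiction
    exfalso
    rw [show α' ++ (T+1) :: (shiftW α'.length β' ++ (T+2) :: shiftW (α'.length+β'.length) γ')
        = (α' ++ (T+1) :: shiftW α'.length β') ++ (T+2) :: shiftW (α'.length+β'.length) γ'
      from by simp] at h
    have hnotin : (T+2) ∉ (α' ++ (T+1) :: shiftW α'.length β') := by
      intro hm
      rcases List.mem_append.1 hm with hm | hm
      · exact hNα' hm
      · rcases List.mem_cons.1 hm with hm | hm
        · omega
        · exact hNβ' hm
    obtain ⟨hαeq, _⟩ := append_cons_inj hNα hnotin h
    have : (T+1) ∈ α := by rw [hαeq]; simp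
    have := mem_permWord hα this; omega
  · -- true false : contradiction
    exfalso
    rw [show α ++ (T+1) :: (shiftW α.length β ++ (T+2) :: shiftW (α.length+β.length) γ)
        = (α ++ (T+1) :: shiftW α.length β) ++ (T+2) :: shiftW (α.length+β.length) γ
      from by simp] at h
    have hnotin : (T+2) ∉ (α ++ (T+1) :: shiftW α.length β) := by
      intro hm
      rcases List.mem_append.1 hm with hm | hm
      · exact hNα hm
      · rcases List.mem_cons.1 hm with hm | hm
        · omega
        · exact hNβ hm
    obtain ⟨hαeq, _⟩ := append_cons_inj hnotin hNα' h
    have : (T+1) ∈ α' := by rw [← hαeq]; simp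
    have := mem_permWord hα' this; omega
  · -- true true : pivots (T+1) then (T+2)
    obtain ⟨hαeq, h2⟩ := append_cons_inj hN1α hN1α' h
    have haa : α.length = α'.length := by rw [hαeq]
    rw [← haa] at h2
    obtain ⟨hβeq, hγeq⟩ := append_cons_inj hNβ (by rw [haa]; exact hNβ') h2
    have hbb : β.length = β'.length := by
      have := congrArg List.length hβeq; simpa [shiftW] using this
    refine ⟨rfl, hαeq, shiftW_inj hβeq, ?_⟩
    rw [← hbb] at hγeq
    exact shiftW_inj hγeq

/- ------------------ counting ------------------ -/

def AvSet (n : ℕ) : Set (List ℕ) := {w | w.length = n ∧ IsPermWord w ∧ Good w}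

lemma avSet_finite (n : ℕ) : (AvSet n).Finite := by
  apply Set.Finite.subset ((List.range' 1 n).permutations.toFinset : Finset (List ℕ)).finite_toSet
  rintro w ⟨hlen, hperm, -⟩
  simp only [Finset.coe_sort_coe, Finset.mem_coe, List.mem_toFinset]
  rw [List.mem_permutations, ← hlen]
  exact hperm

noncomputable def AvF (n : ℕ) : Finset (List ℕ) := (avSet_finite n).toFinset

lemma mem_AvF {n : ℕ} {w : List ℕ} :
    w ∈ AvF n ↔ w.length = n ∧ IsPermWord w ∧ Good w := by
  simp [AvF, AvSet, (avSet_finite n).mem_toFinset]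

noncomputable def GG (n i j : ℕ) : Finset (List ℕ) :=
  ((Finset.univ : Finset Bool) ×ˢ (AvF (i-1) ×ˢ (AvF (j-i-1) ×ˢ AvF (n-j)))).image
    (fun x => Phi x.1 x.2.1 x.2.2.1 x.2.2.2)

lemma GG_card (n i j : ℕ) :
    (GG n i j).card = 2 * (AvF (i-1)).card * (AvF (j-i-1)).card * (AvF (n-j)).card := by
  rw [GG, Finset.card_image_of_injOn, Finset.card_product, Finset.card_product,
    Finset.card_product]
  · rw [Finset.card_univ, Fintype.card_bool]
    ring
  · rintro ⟨b, α, β, γ⟩ hx ⟨b', α', β', γ'⟩ hy hxy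
    simp only [Finset.mem_coe, Finset.mem_product, Finset.mem_univ, true_and, mem_AvF] at hx hy
    obtain ⟨⟨_, hα, _⟩, ⟨_, hβ, _⟩, ⟨_, hγ, _⟩⟩ := hx
    obtain ⟨⟨_, hα', _⟩, ⟨_, hβ', _⟩, ⟨_, hγ', _⟩⟩ := hy
    obtain ⟨e0, e1, e2, e3⟩ := Phi_inj hα hβ hγ hα' hβ' hγ' hxy
    exact Prod.ext e0 (Prod.ext e1 (Prod.ext e2 e3))

lemma GG_subset {n i j : ℕ} (hi : 1 ≤ i) (hij : i < j) (hj : j ≤ n) :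
    GG n i j ⊆ AvF n := by
  intro w hw
  simp only [GG, Finset.mem_image] at hw
  obtain ⟨⟨b, α, β, γ⟩, hx, rfl⟩ := hw
  simp only [Finset.mem_product, Finset.mem_univ, true_and, mem_AvF] at hx
  obtain ⟨⟨lα, hα, gα⟩, ⟨lβ, hβ, gβ⟩, ⟨lγ, hγ, gγ⟩⟩ := hx
  rw [mem_AvF]
  refine ⟨?_, Phi_perm b hα hβ hγ, Phi_good b hα hβ hγ gα gβ gγ⟩
  rw [Phi_length, lα, lβ, lγ]
  omega

theorem card_ineq_main (s : ℕ → ℕ) (h0 : s 0 = 1) (h1 : s 1 = 1)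
    (hrec : ∀ n, 1 < n → s n = ∑ i ∈ Finset.Icc 1 (n - 1), ∑ j ∈ Finset.Icc (i + 1) n,
      2 * s (i - 1) * s (j - i - 1) * s (n - j)) :
    ∀ n, s n ≤ (AvF n).card := by
  intro n
  induction n using Nat.strong_induction_on with
  | _ n ih =>
    rcases lt_or_ge n 2 with hn | hn
    · interval_cases n
      · rw [h0]
        refine Finset.card_pos.2 ⟨[], ?_⟩
        rw [mem_AvF]
        exact ⟨rfl, by simp [IsPermWord], good_nil⟩
      · rw [h1]
        refine Finset.card_pos.2 ⟨[1], ?_⟩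
        rw [mem_AvF]
        exact ⟨rfl, by simp [IsPermWord, List.range'], good_single 1⟩
    · rw [hrec n hn]
      have hdisj : ∀ p ∈ (Finset.Icc 1 (n-1)).sigma (fun i => Finset.Icc (i+1) n),
          ∀ q ∈ (Finset.Icc 1 (n-1)).sigma (fun i => Finset.Icc (i+1) n),
          p ≠ q → Disjoint (GG n p.1 p.2) (GG n q.1 q.2) := by
        rintro ⟨i, j⟩ hp ⟨i', j'⟩ hq hne
        simp only [Finset.mem_sigma, Finset.mem_Icc] at hp hq
        rw [Finset.disjoint_left]
        intro w hw hw'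
        simp only [GG, Finset.mem_image] at hw hw'
        obtain ⟨⟨b, α, β, γ⟩, hx, rfl⟩ := hw
        obtain ⟨⟨b', α', β', γ'⟩, hx', heq⟩ := hw'
        simp only [Finset.mem_product, Finset.mem_univ, true_and, mem_AvF] at hx hx'
        obtain ⟨⟨lα, hα, gα⟩, ⟨lβ, hβ, gβ⟩, ⟨lγ, hγ, gγ⟩⟩ := hx
        obtain ⟨⟨lα', hα', gα'⟩, ⟨lβ', hβ', gβ'⟩, ⟨lγ', hγ', gγ'⟩⟩ := hx'
        obtain ⟨e0, e1, e2, e3⟩ := Phi_inj hα' hβ' hγ' hα hβ hγ heq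
        apply hne
        have hii : i = i' := by
          have : α'.length = α.length := by rw [e1]
          omega
        have hjj : j = j' := by
          have : β'.length = β.length := by rw [e2]
          omega
        simp [hii, hjj]
      calc ∑ i ∈ Finset.Icc 1 (n-1), ∑ j ∈ Finset.Icc (i+1) n,
            2 * s (i-1) * s (j-i-1) * s (n-j)
          ≤ ∑ i ∈ Finset.Icc 1 (n-1), ∑ j ∈ Finset.Icc (i+1) n, (GG n i j).card := by
            refine Finset.sum_le_sum fun i hi => Finset.sum_le_sum fun j hj => ?_
            simp only [Finset.mem_Icc] at hi hj
            rw [GG_card]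
            have t1 : s (i-1) ≤ (AvF (i-1)).card := ih (i-1) (by omega)
            have t2 : s (j-i-1) ≤ (AvF (j-i-1)).card := ih (j-i-1) (by omega)
            have t3 : s (n-j) ≤ (AvF (n-j)).card := ih (n-j) (by omega)
            have h2 : (2:ℕ) ≤ 2 := le_refl 2
            exact Nat.mul_le_mul (Nat.mul_le_mul (Nat.mul_le_mul h2 t1) t2) t3
        _ = ∑ p ∈ (Finset.Icc 1 (n-1)).sigma (fun i => Finset.Icc (i+1) n),
              (GG n p.1 p.2).card := by rw [Finset.sum_sigma]
        _ = (((Finset.Icc 1 (n-1)).sigma (fun i => Finset.Icc (i+1) n)).biUnion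
              (fun p => GG n p.1 p.2)).card := (Finset.card_biUnion hdisj).symm
        _ ≤ (AvF n).card := by
            refine Finset.card_le_card ?_
            refine Finset.biUnion_subset.2 ?_
            rintro ⟨i, j⟩ hp
            simp only [Finset.mem_sigma, Finset.mem_Icc] at hp
            dsimp only at hp ⊢
            exact GG_subset (by omega) (by omega) (by omega)

/-- Let `q n` be the number of permutations of length `n` avoiding every
element of `{2341, 2413, 2431, 3241}`.  If `s 0 = s 1 = 1` and, for `n > 1`,
`s n = ∑_{i=1}^{n-1} ∑_{j=i+1}^{n} 2 * s (i-1) * s (j-i-1) * s (n-j)`, then `q n ≥ s n`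
for all `n ≥ 0`. -/
theorem card_avoid_2341_2413_2431_3241_ge (s : ℕ → ℕ)
    (h0 : s 0 = 1) (h1 : s 1 = 1)
    (hrec : ∀ n, 1 < n → s n = ∑ i ∈ Finset.Icc 1 (n - 1), ∑ j ∈ Finset.Icc (i + 1) n,
      2 * s (i - 1) * s (j - i - 1) * s (n - j))
    (n : ℕ) :
    s n ≤ Nat.card {w : List ℕ // w.length = n ∧ IsPermWord w ∧
      AvoidsPattern w [2, 3, 4, 1] ∧ AvoidsPattern w [2, 4, 1, 3] ∧
      AvoidsPattern w [2, 4, 3, 1] ∧ AvoidsPattern w [3, 2, 4, 1]} := by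
  have hset : {w : List ℕ | w.length = n ∧ IsPermWord w ∧
      AvoidsPattern w [2, 3, 4, 1] ∧ AvoidsPattern w [2, 4, 1, 3] ∧
      AvoidsPattern w [2, 4, 3, 1] ∧ AvoidsPattern w [3, 2, 4, 1]} = AvSet n := by
    ext w
    simp only [Set.mem_setOf_eq, AvSet]
    constructor
    · rintro ⟨hl, hp, a1, a2, a3, a4⟩
      exact ⟨hl, hp, (good_iff_avoids w).2 ⟨a1, a2, a3, a4⟩⟩
    · rintro ⟨hl, hp, hg⟩
      obtain ⟨a1, a2, a3, a4⟩ := (good_iff_avoids w).1 hg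
      exact ⟨hl, hp, a1, a2, a3, a4⟩
  have hcard : Nat.card {w : List ℕ // w.length = n ∧ IsPermWord w ∧
      AvoidsPattern w [2, 3, 4, 1] ∧ AvoidsPattern w [2, 4, 1, 3] ∧
      AvoidsPattern w [2, 4, 3, 1] ∧ AvoidsPattern w [3, 2, 4, 1]} = (AvF n).card := by
    have e1 : Nat.card {w : List ℕ // w.length = n ∧ IsPermWord w ∧
        AvoidsPattern w [2, 3, 4, 1] ∧ AvoidsPattern w [2, 4, 1, 3] ∧
        AvoidsPattern w [2, 4, 3, 1] ∧ AvoidsPattern w [3, 2, 4, 1]}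
        = ({w : List ℕ | w.length = n ∧ IsPermWord w ∧
        AvoidsPattern w [2, 3, 4, 1] ∧ AvoidsPattern w [2, 4, 1, 3] ∧
        AvoidsPattern w [2, 4, 3, 1] ∧ AvoidsPattern w [3, 2, 4, 1]}).ncard := rfl
    rw [e1, hset]
    exact Set.ncard_eq_toFinset_card _ (avSet_finite n)
  rw [hcard]
  exact card_ineq_main s h0 h1 hrec n
end
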